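/- arXiv:math/0505127 — 5 statements merged into one kernel-verified Lean document; each statement's English description precedes it below -/
import Mathlib

section
/- If γ_1 < 1, then the sequence Q_n converges and lim_{n→∞} Q_n = Q_0/(1 − γ_1). -/
open Filter Topology

/-- Theorem of Takács: if `γ₁ = Σ_{j≥1} j f_j < 1`, then the sequence `Q_n` defined by the
convolution-type recurrence `Q_n = Σ_{i=0}^n f_i Q_{n-i+1}` converges to `Q_0 / (1 - γ₁)`. -/
theorem takacs_gamma1_lt_one
    (f Q : ℕ → ℝ)
    (hf0 : 0 < f 0) (hf : ∀ i, 0 ≤ f i)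
    (hfsum : ∑' i : ℕ, f i = 1)
    (hQ0 : 0 < Q 0)
    (hrec : ∀ n, Q n = ∑ i ∈ Finset.range (n + 1), f i * Q (n - i + 1))
    (hγ1 : ∑' j : ℕ, ENNReal.ofReal ((j : ℝ) * f j) < 1) :
    Tendsto Q atTop
      (𝓝 (Q 0 / (1 - (∑' j : ℕ, ENNReal.ofReal ((j : ℝ) * f j)).toReal))) := by
  classical
  set γ' : ENNReal := ∑' j : ℕ, ENNReal.ofReal ((j : ℝ) * f j) with hγ'def
  have hγ'top : γ' ≠ ⊤ := (hγ1.trans ENNReal.one_lt_top).ne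
  set γ : ℝ := γ'.toReal with hγdef
  have hγlt : γ < 1 := by
    have := (ENNReal.toReal_lt_toReal hγ'top (by simp)).2 hγ1
    simpa using this
  have hγ0 : 0 ≤ γ := ENNReal.toReal_nonneg
  -- summability of f
  have hsumf : Summable f := by
    by_contra h
    rw [tsum_eq_zero_of_not_summable h] at hfsum
    norm_num at hfsum
  set F : ℕ → ℝ := fun m => ∑ i ∈ Finset.range (m + 1), f i with hFdef
  set R : ℕ → ℝ := fun m => 1 - F m with hRdef
  have hFle : ∀ m, F m ≤ 1 := by
    intro m
    rw [← hfsum]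
    exact Summable.sum_le_tsum _ (fun i _ => hf i) hsumf
  have hR0 : ∀ m, 0 ≤ R m := fun m => by simp [hRdef, hFle m]
  have htail : ∀ m : ℕ, Summable fun j => f (j + m) := fun m =>
    (summable_nat_add_iff m).2 hsumf
  have hRtail : ∀ m, R m = ∑' j, f (j + (m + 1)) := by
    intro m
    have h := Summable.sum_add_tsum_nat_add (f := f) (m + 1) hsumf
    rw [hfsum] at h
    simp only [hRdef, hFdef]
    linarith
  -- ∑' m, R m = γ  via an ENNReal double sum interchange
  have key : ∑' m : ℕ, ENNReal.ofReal (R m) = γ' := by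
    have step1 : ∀ m : ℕ, ENNReal.ofReal (R m)
        = ∑' k : ℕ, (if m < k then ENNReal.ofReal (f k) else 0) := by
      intro m
      rw [hRtail m, ENNReal.ofReal_tsum_of_nonneg (fun j => hf _) (htail (m + 1))]
      have hinj : Function.Injective (fun j : ℕ => j + (m + 1)) := by
        intro a b hab; simpa using hab
      have := Function.Injective.tsum_eq (f := fun k : ℕ =>
        (if m < k then ENNReal.ofReal (f k) else 0)) hinj ?_
      · rw [← this]
        apply tsum_congr
        intro j
        rw [if_pos (by omega)]
      · intro k hk
        simp only [Function.mem_support, ne_eq] at hk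
        have hmk : m < k := by
          by_contra hmk
          exact hk (if_neg hmk)
        refine ⟨k - (m + 1), ?_⟩
        show k - (m + 1) + (m + 1) = k
        omega
    calc ∑' m : ℕ, ENNReal.ofReal (R m)
        = ∑' (m : ℕ) (k : ℕ), (if m < k then ENNReal.ofReal (f k) else 0) := by
          exact tsum_congr step1
      _ = ∑' (k : ℕ) (m : ℕ), (if m < k then ENNReal.ofReal (f k) else 0) :=
          ENNReal.tsum_comm
      _ = γ' := by
          apply tsum_congr
          intro k
          have : ∑' m : ℕ, (if m < k then ENNReal.ofReal (f k) else 0)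
              = ∑ m ∈ Finset.range k, (if m < k then ENNReal.ofReal (f k) else 0) := by
            apply tsum_eq_sum
            intro m hm
            rw [if_neg (by simpa using hm)]
          rw [this]
          rw [Finset.sum_congr rfl (fun m hm => if_pos (Finset.mem_range.mp hm)),
            Finset.sum_const, Finset.card_range, nsmul_eq_mul,
            ENNReal.ofReal_mul (by positivity : (0:ℝ) ≤ (k:ℝ))]
          simp
  have hsumR : Summable R := by
    have h := ENNReal.summable_toReal (by rw [key]; exact hγ'top)
    have : (fun m => (ENNReal.ofReal (R m)).toReal) = R := by
      funext m; exact ENNReal.toReal_ofReal (hR0 m)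
    rwa [this] at h
  have htsumR : ∑' m, R m = γ := by
    rw [hγdef, ← key, ENNReal.tsum_toReal_eq (fun _ => ENNReal.ofReal_ne_top)]
    exact tsum_congr fun m => (ENNReal.toReal_ofReal (hR0 m)).symm
  have hsumR1 : Summable fun m => R (m + 1) := (summable_nat_add_iff 1).2 hsumR
  set S : ℝ := ∑' m, R (m + 1) with hSdef
  have hSval : S = γ - (1 - f 0) := by
    have h := Summable.tsum_eq_zero_add hsumR
    rw [htsumR] at h
    have hR0val : R 0 = 1 - f 0 := by simp [hRdef, hFdef]
    rw [hR0val] at h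
    rw [hSdef]; linarith
  have hSnn : 0 ≤ S := tsum_nonneg fun m => hR0 _
  -- splitting of the recurrence
  have hsplit : ∀ n, Q n = f 0 * Q (n + 1) + ∑ i ∈ Finset.range n, f (i + 1) * Q (n - i) := by
    intro n
    rw [hrec n, Finset.sum_range_succ']
    simp only [Nat.sub_zero]
    rw [add_comm]
    congr 1
    apply Finset.sum_congr rfl
    intro i hi
    have hi' := Finset.mem_range.mp hi
    congr 2
    omega
  -- partial-sum bound for f
  have hFf0 : ∀ n, f 0 + ∑ i ∈ Finset.range n, f (i + 1) ≤ 1 := by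
    intro n
    have : ∑ i ∈ Finset.range (n + 1), f i ≤ 1 := hFle n
    rw [Finset.sum_range_succ'] at this
    linarith
  -- monotonicity step
  have hstep : ∀ n, (∀ k ≤ n, Q k ≤ Q n) → Q n ≤ Q (n + 1) := by
    intro n hP
    have hQn0 : 0 < Q n := lt_of_lt_of_le hQ0 (hP 0 (Nat.zero_le n))
    have hsum_le : ∑ i ∈ Finset.range n, f (i + 1) * Q (n - i)
        ≤ (∑ i ∈ Finset.range n, f (i + 1)) * Q n := by
      rw [Finset.sum_mul]
      apply Finset.sum_le_sum
      intro i hi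
      exact mul_le_mul_of_nonneg_left (hP (n - i) (Nat.sub_le n i)) (hf (i + 1))
    have h1 := hsplit n
    have h2 := hFf0 n
    nlinarith [hf 0, hQn0]
  have hP : ∀ n, ∀ k ≤ n, Q k ≤ Q n := by
    intro n
    induction n with
    | zero => intro k hk; simp only [Nat.le_zero] at hk; rw [hk]
    | succ n ih =>
        intro k hk
        by_cases h : k ≤ n
        · exact (ih k h).trans (hstep n ih)
        · have : k = n + 1 := by omega
          rw [this]
  have hQmono : Monotone Q := monotone_nat_of_le_succ fun n => hstep n (hP n)
  have hQpos : ∀ n, 0 < Q n := fun n => lt_of_lt_of_le hQ0 (hP n 0 (Nat.zero_le n))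
  -- the key finite identity
  have hA : ∀ N, f 0 * Q N = Q 0 * F N + ∑ k ∈ Finset.range N, Q k * R (N - k) := by
    intro N
    induction N with
    | zero => simp [hFdef, mul_comm]
    | succ N ih =>
        have hd := hsplit N
        -- reindex ∑ i ∈ range N, f (i+1) * Q (N - i)  =  ∑ k ∈ range (N+1), f (N+1-k) * Q k - f (N+1) * Q 0
        have hre : ∑ i ∈ Finset.range N, f (i + 1) * Q (N - i)
            = ∑ i ∈ Finset.range N, f (N - i) * Q (i + 1) := by
          rw [← Finset.sum_range_reflect (fun i => f (N - i) * Q (i + 1)) N]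
          apply Finset.sum_congr rfl
          intro i hi
          have hi' := Finset.mem_range.mp hi
          congr 2 <;> omega
        have hre2 : ∑ i ∈ Finset.range N, f (N - i) * Q (i + 1)
            = (∑ k ∈ Finset.range (N + 1), f (N + 1 - k) * Q k) - f (N + 1) * Q 0 := by
          rw [Finset.sum_range_succ' (fun k => f (N + 1 - k) * Q k) N]
          have : ∀ i ∈ Finset.range N, f (N + 1 - (i + 1)) * Q (i + 1) = f (N - i) * Q (i + 1) := by
            intro i hi
            congr 2
            omega
          rw [Finset.sum_congr rfl this]
          simp
        have hre3 : ∑ k ∈ Finset.range (N + 1), f (N + 1 - k) * Q k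
            = (∑ k ∈ Finset.range N, f (N + 1 - k) * Q k) + f 1 * Q N := by
          rw [Finset.sum_range_succ]
          congr 3
          omega
        -- expand the target sum
        have ht1 : ∑ k ∈ Finset.range (N + 1), Q k * R (N + 1 - k)
            = (∑ k ∈ Finset.range N, Q k * R (N + 1 - k)) + Q N * R 1 := by
          rw [Finset.sum_range_succ]
          congr 3
          omega
        have ht2 : ∀ k ∈ Finset.range N, Q k * R (N + 1 - k)
            = Q k * R (N - k) - Q k * f (N + 1 - k) := by
          intro k hk
          have hk' := Finset.mem_range.mp hk
          have h1 : N + 1 - k = (N - k) + 1 := by omega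
          have h2 : R ((N - k) + 1) = R (N - k) - f ((N - k) + 1) := by
            simp only [hRdef, hFdef]
            rw [Finset.sum_range_succ]
            ring
          rw [h1, h2, ← h1]
          ring
        have ht3 : ∑ k ∈ Finset.range N, Q k * R (N + 1 - k)
            = (∑ k ∈ Finset.range N, Q k * R (N - k))
              - ∑ k ∈ Finset.range N, Q k * f (N + 1 - k) := by
          rw [Finset.sum_congr rfl ht2, Finset.sum_sub_distrib]
        have hF1 : F (N + 1) = F N + f (N + 1) := by
          simp only [hFdef]
          rw [Finset.sum_range_succ]
        have hR1 : R 1 = 1 - f 0 - f 1 := by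
          simp only [hRdef, hFdef]
          rw [Finset.sum_range_succ, Finset.sum_range_one]
          ring
        have hswap : ∑ i ∈ Finset.range N, f (N + 1 - i) * Q i
            = ∑ k ∈ Finset.range N, Q k * f (N + 1 - k) := by
          apply Finset.sum_congr rfl
          intro i _
          ring
        rw [ht1, ht3, hF1, hR1]
        have heq : f 0 * Q (N + 1) = Q N - ∑ i ∈ Finset.range N, f (i + 1) * Q (N - i) := by
          linarith [hd]
        rw [heq, hre, hre2, hre3, ← hswap]
        linarith [ih]
  -- reflected form of the identity
  have hA' : ∀ N, f 0 * Q N = Q 0 * F N + ∑ k ∈ Finset.range N, Q (N - 1 - k) * R (k + 1) := by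
    intro N
    rw [hA N]
    congr 1
    rw [← Finset.sum_range_reflect (fun k => Q (N - 1 - k) * R (k + 1)) N]
    apply Finset.sum_congr rfl
    intro k hk
    have hk' := Finset.mem_range.mp hk
    congr 2 <;> omega
  -- boundedness
  set B : ℝ := Q 0 / (1 - γ) with hBdef
  have hBpos : 0 < B := div_pos hQ0 (by linarith)
  have hne1γ : (1 : ℝ) - γ ≠ 0 := by linarith
  have hBQ0 : Q 0 = B * (1 - γ) := by
    rw [hBdef, div_mul_cancel₀ _ hne1γ]
  have hSM_le : ∀ N, ∑ k ∈ Finset.range N, R (k + 1) ≤ S :=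
    fun N => Summable.sum_le_tsum _ (fun k _ => hR0 _) hsumR1
  have hbound : ∀ N, Q N ≤ B := by
    intro N
    induction N using Nat.strong_induction_on with
    | _ N ih =>
      have hsum_le : ∑ k ∈ Finset.range N, Q (N - 1 - k) * R (k + 1)
          ≤ B * S := by
        calc ∑ k ∈ Finset.range N, Q (N - 1 - k) * R (k + 1)
            ≤ ∑ k ∈ Finset.range N, B * R (k + 1) := by
              apply Finset.sum_le_sum
              intro k hk
              have hk' := Finset.mem_range.mp hk
              exact mul_le_mul_of_nonneg_right (ih (N - 1 - k) (by omega)) (hR0 _)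
          _ = B * ∑ k ∈ Finset.range N, R (k + 1) := by rw [Finset.mul_sum]
          _ ≤ B * S := mul_le_mul_of_nonneg_left (hSM_le N) hBpos.le
      have h1 := hA' N
      have h2 : Q 0 * F N ≤ Q 0 * 1 := mul_le_mul_of_nonneg_left (hFle N) hQ0.le
      have hSv := hSval
      nlinarith [hf0]
  -- convergence
  have hbdd : BddAbove (Set.range Q) := by
    refine ⟨B, ?_⟩
    rintro x ⟨n, rfl⟩
    exact hbound n
  set L : ℝ := ⨆ n, Q n with hLdef
  have hQL : Tendsto Q atTop (𝓝 L) := tendsto_atTop_ciSup hQmono hbdd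
  have hQleL : ∀ n, Q n ≤ L := fun n => le_ciSup hbdd n
  have hLpos : 0 < L := lt_of_lt_of_le hQ0 (hQleL 0)
  -- F N → 1
  have hFlim : Tendsto F atTop (𝓝 1) := by
    have h := hsumf.hasSum.tendsto_sum_nat
    rw [hfsum] at h
    exact h.comp (tendsto_add_atTop_nat 1)
  -- upper inequality : f 0 * L ≤ Q 0 + L * S
  have hupper : f 0 * L ≤ Q 0 + L * S := by
    have hband : ∀ N, f 0 * Q N ≤ Q 0 + L * S := by
      intro N
      have h1 := hA' N
      have hsum_le : ∑ k ∈ Finset.range N, Q (N - 1 - k) * R (k + 1) ≤ L * S := by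
        calc ∑ k ∈ Finset.range N, Q (N - 1 - k) * R (k + 1)
            ≤ ∑ k ∈ Finset.range N, L * R (k + 1) :=
              Finset.sum_le_sum fun k hk =>
                mul_le_mul_of_nonneg_right (hQleL _) (hR0 _)
          _ = L * ∑ k ∈ Finset.range N, R (k + 1) := by rw [Finset.mul_sum]
          _ ≤ L * S := mul_le_mul_of_nonneg_left (hSM_le N) hLpos.le
      have h2 : Q 0 * F N ≤ Q 0 * 1 := mul_le_mul_of_nonneg_left (hFle N) hQ0.le
      linarith
    exact le_of_tendsto' (hQL.const_mul (f 0)) hband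
  -- lower inequality : Q 0 + L * S ≤ f 0 * L
  have hlower : Q 0 + L * S ≤ f 0 * L := by
    have hM : ∀ M, Q 0 + L * ∑ k ∈ Finset.range M, R (k + 1) ≤ f 0 * L := by
      intro M
      have hband : ∀ᶠ N in atTop,
          Q 0 * F N + Q (N - M) * ∑ k ∈ Finset.range M, R (k + 1) ≤ f 0 * Q N := by
        filter_upwards [eventually_ge_atTop M] with N hNM
        have h1 := hA' N
        have hdrop : ∑ k ∈ Finset.range M, Q (N - 1 - k) * R (k + 1)
            ≤ ∑ k ∈ Finset.range N, Q (N - 1 - k) * R (k + 1) := by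
          apply Finset.sum_le_sum_of_subset_of_nonneg
          · exact Finset.range_subset_range.mpr hNM
          · intro k _ _
            exact mul_nonneg (hQpos _).le (hR0 _)
        have hterm : Q (N - M) * ∑ k ∈ Finset.range M, R (k + 1)
            ≤ ∑ k ∈ Finset.range M, Q (N - 1 - k) * R (k + 1) := by
          rw [Finset.mul_sum]
          apply Finset.sum_le_sum
          intro k hk
          have hk' := Finset.mem_range.mp hk
          exact mul_le_mul_of_nonneg_right (hQmono (by omega : N - M ≤ N - 1 - k)) (hR0 _)
        linarith
      have hlhs : Tendsto (fun N => Q 0 * F N + Q (N - M) * ∑ k ∈ Finset.range M, R (k + 1))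
          atTop (𝓝 (Q 0 * 1 + L * ∑ k ∈ Finset.range M, R (k + 1))) := by
        exact ((hFlim.const_mul (Q 0)).add
          (((hQL.comp (tendsto_sub_atTop_nat M))).mul_const _))
      have hrhs : Tendsto (fun N => f 0 * Q N) atTop (𝓝 (f 0 * L)) := hQL.const_mul _
      have := le_of_tendsto_of_tendsto hlhs hrhs hband
      linarith [this]
    have hSlim : Tendsto (fun M => Q 0 + L * ∑ k ∈ Finset.range M, R (k + 1))
        atTop (𝓝 (Q 0 + L * S)) := by
      exact tendsto_const_nhds.add ((hsumR1.hasSum.tendsto_sum_nat).const_mul L)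
    exact le_of_tendsto' hSlim hM
  -- conclude
  have hLval : L = Q 0 / (1 - γ) := by
    have heq : f 0 * L = Q 0 + L * S := le_antisymm hupper hlower
    rw [hSval] at heq
    have h3 : L * (1 - γ) = Q 0 := by nlinarith [heq]
    rw [eq_div_iff hne1γ]
    exact h3
  have hBL : B = L := hLval.symm
  rw [hBL]
  exact hQL
end

section
/- If γ_1 = 1 and γ_2 < ∞, then lim_{n→∞} Q_n/n = 2Q_0/γ_2. (Note that f_0 > 0 together with γ_1 = 1 forces γ_2 > 0.) -/
/-!
Let `m_k = ∑_{j>k} f_j` and `b_k = ∑_{j>k} m_j`. Summing tails by parts gives `∑ m_k = γ₁ = 1`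
and `∑ b_k = γ₂ / 2`, and `b_0 = 1 - m_0 = f_0`. In power series the recurrence reads
`X Q = F (Q - Q₀)`, while `(1 - X) M = 1 - F` and `(1 - X) B = 1 - M`. Hence the increments
`v = (1 - X) Q` satisfy the renewal equation `v (1 - M) = Q₀ F`; as `1 - M` has positive constant
term and nonpositive other coefficients, `v ≥ 0`. Moreover `B v = Q₀ F / (1 - X)`, whose
coefficients tend to `Q₀`. A Tauberian squeeze then finishes: `v` is bounded, and
`W_N = ∑_k b_k Q_{N-k}` (whose Cesàro means tend to `Q₀`) lies between
`(∑_{k≤K} b_k) (Q_N - K sup v)` and `(∑ b_k) Q_N`, so `Q_N / N → Q₀ / (γ₂ / 2)`.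
-/

open Filter Topology
open scoped ENNReal

theorem hasSum_toReal_of_tsum_ofReal {u : ℕ → ℝ} (hu : ∀ n, 0 ≤ u n) {a : ℝ≥0∞}
    (h : ∑' n, ENNReal.ofReal (u n) = a) (ha : a ≠ ⊤) : HasSum u a.toReal := by
  have := ENNReal.hasSum_toReal (h ▸ ha)
  simp only [ENNReal.toReal_ofReal (hu _)] at this
  rwa [← h, ← ENNReal.ofReal_tsum_of_nonneg hu this.summable,
    ENNReal.toReal_ofReal (tsum_nonneg hu)]

open Finset in
theorem ENNReal.tsum_mul_tsum_add_succ (w G : ℕ → ℝ≥0∞) :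
    ∑' k, w k * ∑' j, G (j + k + 1) = ∑' n, (∑ i ∈ range n, w i) * G n := by
  have tail_eq (k : ℕ) : ∑' j, G (j + k + 1) = ∑' n, if k < n then G n else 0 := by
    rw [← ENNReal.summable.sum_add_tsum_nat_add' (f := fun n => if k < n then G n else 0)
        (k := k + 1), sum_eq_zero fun n hn => if_neg (by rw [mem_range] at hn; omega), zero_add]
    exact tsum_congr fun j => by rw [if_pos (by omega), add_assoc]
  simp_rw [tail_eq, ← ENNReal.tsum_mul_left]
  rw [ENNReal.tsum_comm]
  refine tsum_congr fun n => ?_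
  rw [sum_mul, tsum_eq_sum (s := range n) fun k hk => by rw [mem_range] at hk; simp [hk]]
  exact sum_congr rfl fun k hk => by rw [if_pos (mem_range.1 hk)]

noncomputable def tailSum (g : ℕ → ℝ) (k : ℕ) : ℝ := ∑' j, g (j + k + 1)

section TailSum

open Finset

variable {g : ℕ → ℝ}

theorem tailSum_nonneg (hg : ∀ n, 0 ≤ g n) (k : ℕ) : 0 ≤ tailSum g k :=
  tsum_nonneg fun _ => hg _

theorem tailSum_zero {s : ℝ} (hg : HasSum g s) : tailSum g 0 = s - g 0 := by
  rw [← hg.tsum_eq, hg.summable.tsum_eq_zero_add, tailSum]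
  simp

theorem tailSum_succ (hg : Summable g) (k : ℕ) : tailSum g (k + 1) = tailSum g k - g (k + 1) := by
  have hk : Summable fun j => g (j + k + 1) := (summable_nat_add_iff (k + 1)).2 hg
  rw [tailSum, tailSum, hk.tsum_eq_zero_add, zero_add, add_sub_cancel_left]
  exact tsum_congr fun j => by ring_nf

theorem ofReal_tailSum (hg : ∀ n, 0 ≤ g n) (hgs : Summable g) (k : ℕ) :
    ENNReal.ofReal (tailSum g k) = ∑' j, ENNReal.ofReal (g (j + k + 1)) :=
  ENNReal.ofReal_tsum_of_nonneg (fun _ => hg _) ((summable_nat_add_iff (k + 1)).2 hgs)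

theorem tsum_ofReal_mul_tailSum (hg : ∀ n, 0 ≤ g n) (hgs : Summable g) {w : ℕ → ℝ}
    (hw : ∀ n, 0 ≤ w n) :
    ∑' k, ENNReal.ofReal (w k * tailSum g k) =
      ∑' n, ENNReal.ofReal ((∑ i ∈ range n, w i) * g n) := by
  simp_rw [ENNReal.ofReal_mul (hw _), ENNReal.ofReal_mul (sum_nonneg fun i _ => hw i),
    ofReal_tailSum hg hgs, ENNReal.ofReal_sum_of_nonneg fun i _ => hw i]
  exact ENNReal.tsum_mul_tsum_add_succ (fun k => ENNReal.ofReal (w k))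
    (fun n => ENNReal.ofReal (g n))

theorem hasSum_tailSum (hg : ∀ n, 0 ≤ g n) (hgs : Summable g)
    (h : ∑' n : ℕ, ENNReal.ofReal (n * g n) ≠ ⊤) :
    HasSum (tailSum g) (∑' n : ℕ, ENNReal.ofReal (n * g n)).toReal := by
  refine hasSum_toReal_of_tsum_ofReal (tailSum_nonneg hg) ?_ h
  simpa using tsum_ofReal_mul_tailSum hg hgs (w := fun _ => 1) fun _ => zero_le_one

theorem hasSum_tailSum_tailSum (hg : ∀ n, 0 ≤ g n) (hgs : Summable g)
    (hts : Summable (tailSum g)) (h : ∑' n, ENNReal.ofReal (n.descFactorial 2 * g n) ≠ ⊤) :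
    HasSum (tailSum (tailSum g)) ((∑' n, ENNReal.ofReal (n.descFactorial 2 * g n)).toReal / 2) := by
  have two_mul_sum_range (n : ℕ) : (n.descFactorial 2 : ℝ) = 2 * ∑ i ∈ range n, (i : ℝ) := by
    have : n.descFactorial 2 = 2 * ∑ i ∈ range n, i := by
      rw [mul_comm, sum_range_id_mul_two, Nat.descFactorial_succ, Nat.descFactorial_one, mul_comm]
    rw [this]; push_cast; rfl
  rw [← ENNReal.toReal_ofNat 2, ← ENNReal.toReal_div]
  refine hasSum_toReal_of_tsum_ofReal (tailSum_nonneg (tailSum_nonneg hg)) ?_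
    (ENNReal.div_ne_top h two_ne_zero)
  have h1 := tsum_ofReal_mul_tailSum (tailSum_nonneg hg) hts (w := fun _ => 1) fun _ => zero_le_one
  have h2 := tsum_ofReal_mul_tailSum hg hgs (w := fun i => (i : ℝ)) fun i => i.cast_nonneg
  simp only [one_mul, sum_const, card_range, nsmul_eq_mul, mul_one] at h1
  rw [h1, h2, ENNReal.div_eq_inv_mul, ← ENNReal.tsum_mul_left]
  refine tsum_congr fun n => ?_
  rw [two_mul_sum_range, mul_assoc, ENNReal.ofReal_mul (zero_le_two (α := ℝ)), ENNReal.ofReal_ofNat,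
    ← mul_assoc, ENNReal.inv_mul_cancel two_ne_zero ENNReal.ofNat_ne_top, one_mul]

end TailSum

namespace PowerSeries

open Finset

theorem coeff_mul_mk_one {R : Type*} [Semiring R] (p : R⟦X⟧) (n : ℕ) :
    coeff n (p * mk 1) = ∑ i ∈ range (n + 1), coeff i p := by
  simp [coeff_mul, Nat.sum_antidiagonal_eq_sum_range_succ_mk]

theorem coeff_mk_mul {R : Type*} [Semiring R] (a : ℕ → R) (q : R⟦X⟧) (n : ℕ) :
    coeff n (mk a * q) = ∑ k ∈ range (n + 1), a k * coeff (n - k) q := by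
  simp [coeff_mul, Nat.sum_antidiagonal_eq_sum_range_succ_mk]

theorem sum_range_coeff_one_sub_X_mul {R : Type*} [CommRing R] (p : R⟦X⟧) (n : ℕ) :
    ∑ i ∈ range (n + 1), coeff i ((1 - X) * p) = coeff n p := by
  rw [← coeff_mul_mk_one, mul_comm (1 - X), mul_assoc, mul_comm (1 - X),
    mk_one_mul_one_sub_eq_one, mul_one]

theorem coeff_nonneg_of_coeff_mul_nonneg {R : Type*} [CommRing R] [LinearOrder R]
    [IsStrictOrderedRing R] {a v : R⟦X⟧} (ha0 : 0 < coeff 0 a)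
    (ha : ∀ k, k ≠ 0 → coeff k a ≤ 0) (hav : ∀ n, 0 ≤ coeff n (a * v)) (n : ℕ) :
    0 ≤ coeff n v := by
  induction n using Nat.strong_induction_on with
  | _ n ih =>
    have hmem : ((0, n) : ℕ × ℕ) ∈ antidiagonal n := by simp
    have hrest : ∑ p ∈ (antidiagonal n).erase (0, n), coeff p.1 a * coeff p.2 v ≤ 0 := by
      refine sum_nonpos fun p hp => ?_
      obtain ⟨hp0, hpn⟩ := mem_erase.1 hp
      rw [HasAntidiagonal.mem_antidiagonal] at hpn
      have hp1 : p.1 ≠ 0 := fun h => hp0 (Prod.ext h (by simp at hpn ⊢; omega))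
      exact mul_nonpos_of_nonpos_of_nonneg (ha _ hp1) (ih _ (by omega))
    have h := hav n
    rw [coeff_mul, ← add_sum_erase _ _ hmem] at h
    exact (mul_nonneg_iff_of_pos_left ha0).1 (by linarith)

theorem X_mul_mk_eq_of_recurrence {R : Type*} [CommRing R] {f Q : ℕ → R}
    (hrec : ∀ n, Q n = ∑ i ∈ range (n + 1), f i * Q (n - i + 1)) :
    X * mk Q = mk f * (mk Q - C (Q 0)) := by
  ext (_ | n)
  · simp
  · rw [coeff_succ_X_mul, coeff_mk, hrec n, coeff_mk_mul, sum_range_succ _ (n + 1)]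
    simp only [Nat.sub_self, map_sub, coeff_mk, coeff_C, if_true, sub_self, mul_zero, add_zero]
    refine sum_congr rfl fun i hi => ?_
    rw [mem_range] at hi
    rw [if_neg (by omega), sub_zero, Nat.sub_add_comm (by omega)]

theorem one_sub_X_mul_mk_tailSum {g : ℕ → ℝ} {s : ℝ} (hg : HasSum g s) :
    (1 - X) * mk (tailSum g) = C s - mk g := by
  ext (_ | n)
  · simp [tailSum_zero hg]
  · simp [sub_mul, coeff_succ_X_mul, tailSum_succ hg.summable]

end PowerSeries

section Renewal

open PowerSeries

variable {f Q : ℕ → ℝ}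

theorem one_sub_X_mul_mk_mul_one_sub_mk_tailSum (hf : HasSum f 1)
    (hrec : ∀ n, Q n = ∑ i ∈ Finset.range (n + 1), f i * Q (n - i + 1)) :
    (1 - X) * mk Q * (1 - mk (tailSum f)) = C (Q 0) * mk f := by
  have hm := one_sub_X_mul_mk_tailSum hf
  rw [map_one] at hm
  linear_combination (-mk Q) * hm - X_mul_mk_eq_of_recurrence hrec

theorem coeff_one_sub_X_mul_mk_nonneg (hf : HasSum f 1) (hf0 : 0 < f 0) (hf_nonneg : ∀ i, 0 ≤ f i)
    (hQ0 : 0 ≤ Q 0) (hrec : ∀ n, Q n = ∑ i ∈ Finset.range (n + 1), f i * Q (n - i + 1)) (n : ℕ) :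
    0 ≤ coeff n ((1 - X) * mk Q) := by
  refine coeff_nonneg_of_coeff_mul_nonneg (a := 1 - mk (tailSum f)) ?_ ?_ (fun n => ?_) n
  · simpa [tailSum_zero hf] using hf0
  · intro k hk
    simpa [coeff_one, hk] using tailSum_nonneg hf_nonneg k
  · rw [mul_comm, one_sub_X_mul_mk_mul_one_sub_mk_tailSum hf hrec, coeff_C_mul, coeff_mk]
    exact mul_nonneg hQ0 (hf_nonneg n)

theorem mk_tailSum_tailSum_mul (hf : HasSum f 1) (hm : HasSum (tailSum f) 1)
    (hrec : ∀ n, Q n = ∑ i ∈ Finset.range (n + 1), f i * Q (n - i + 1)) :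
    mk (tailSum (tailSum f)) * ((1 - X) * mk Q) = C (Q 0) * mk f * mk 1 := by
  have hb := one_sub_X_mul_mk_tailSum hm
  rw [map_one] at hb
  linear_combination (-(mk (tailSum (tailSum f)) * ((1 - X) * mk Q))) * mk_one_mul_one_sub_eq_one ℝ
    + (mk 1 * ((1 - X) * mk Q)) * hb + mk 1 * one_sub_X_mul_mk_mul_one_sub_mk_tailSum hf hrec

theorem tendsto_coeff_mk_tailSum_tailSum_mul (hf : HasSum f 1) (hm : HasSum (tailSum f) 1)
    (hrec : ∀ n, Q n = ∑ i ∈ Finset.range (n + 1), f i * Q (n - i + 1)) :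
    Tendsto (fun n => coeff n (mk (tailSum (tailSum f)) * ((1 - X) * mk Q))) atTop (𝓝 (Q 0)) := by
  have h := (hf.tendsto_sum_nat.comp (tendsto_add_atTop_nat 1)).const_mul (Q 0)
  rw [mul_one] at h
  refine h.congr fun n => ?_
  rw [mk_tailSum_tailSum_mul hf hm hrec, coeff_mul_mk_one]
  simp [Finset.mul_sum]

end Renewal

theorem tendsto_of_lower_of_upper_family {α ι κ : Type*} [TopologicalSpace α] [LinearOrder α]
    [OrderTopology α] {la : Filter ι} {lk : Filter κ} [lk.NeBot] {u l : ι → α} {U : κ → ι → α}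
    {A : κ → α} {a : α} (hl : Tendsto l la (𝓝 a)) (hlu : ∀ᶠ n in la, l n ≤ u n)
    (hA : Tendsto A lk (𝓝 a)) (hU : ∀ K, Tendsto (U K) la (𝓝 (A K)))
    (huU : ∀ᶠ K in lk, ∀ᶠ n in la, u n ≤ U K n) : Tendsto u la (𝓝 a) := by
  refine tendsto_order.2 ⟨fun c hc => ?_, fun c hc => ?_⟩
  · filter_upwards [hl.eventually (eventually_gt_nhds hc), hlu] with n h1 h2 using h1.trans_le h2
  · obtain ⟨K, hK, hKu⟩ := ((hA.eventually (eventually_lt_nhds hc)).and huU).exists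
    filter_upwards [(hU K).eventually (eventually_lt_nhds hK), hKu] with n h1 h2
      using h2.trans_lt h1

theorem Filter.Tendsto.sum_range_succ_div {u : ℕ → ℝ} {l : ℝ} (hu : Tendsto u atTop (𝓝 l)) :
    Tendsto (fun n : ℕ => (∑ i ∈ Finset.range (n + 1), u i) / n) atTop (𝓝 l) := by
  have hlast : Tendsto (fun n : ℕ => u n / n) atTop (𝓝 0) :=
    hu.div_atTop tendsto_natCast_atTop_atTop
  simpa [Finset.sum_range_succ, div_eq_inv_mul, mul_add] using hu.cesaro.add hlast

theorem sum_range_add_le {v : ℕ → ℝ} {C : ℝ} (hvC : ∀ n, v n ≤ C) (a k : ℕ) :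
    ∑ i ∈ Finset.range (a + k), v i ≤ ∑ i ∈ Finset.range a, v i + k * C := by
  rw [Finset.sum_range_add]
  have := Finset.sum_le_card_nsmul (Finset.range k) (fun i => v (a + i)) C fun i _ => hvC _
  simp only [Finset.card_range, nsmul_eq_mul] at this
  linarith

open Finset in
theorem sum_range_mul_sum_range_sub (b v : ℕ → ℝ) (N : ℕ) :
    ∑ k ∈ range (N + 1), b k * ∑ i ∈ range (N - k + 1), v i =
      ∑ n ∈ range (N + 1), ∑ p ∈ antidiagonal n, b p.1 * v p.2 := by
  have h := congrArg (PowerSeries.coeff N)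
    (mul_assoc (PowerSeries.mk b) (PowerSeries.mk v) (PowerSeries.mk 1))
  rw [PowerSeries.coeff_mul_mk_one, PowerSeries.coeff_mk_mul] at h
  simp only [PowerSeries.coeff_mul_mk_one, PowerSeries.coeff_mk] at h
  simpa only [PowerSeries.coeff_mul, PowerSeries.coeff_mk] using h.symm

section RenewalTheorem

open Finset

variable {b v : ℕ → ℝ}

theorem exists_le_of_tendsto_sum_antidiagonal (hb : ∀ k, 0 ≤ b k) (hb0 : 0 < b 0)
    (hv : ∀ n, 0 ≤ v n) {L : ℝ}
    (hconv : Tendsto (fun n => ∑ p ∈ antidiagonal n, b p.1 * v p.2) atTop (𝓝 L)) :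
    ∃ C, ∀ n, v n ≤ C := by
  obtain ⟨D, hD⟩ := hconv.bddAbove_range
  refine ⟨D / b 0, fun n => (le_div_iff₀' hb0).2 ?_⟩
  calc b 0 * v n ≤ ∑ p ∈ antidiagonal n, b p.1 * v p.2 :=
        single_le_sum (f := fun p => b p.1 * v p.2) (fun p _ => mul_nonneg (hb _) (hv _))
          (by simp : ((0, n) : ℕ × ℕ) ∈ antidiagonal n)
    _ ≤ D := hD ⟨n, rfl⟩

theorem sum_range_mul_sum_range_sub_le (hb : ∀ k, 0 ≤ b k) (hv : ∀ n, 0 ≤ v n) (N : ℕ) :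
    ∑ k ∈ range (N + 1), b k * ∑ i ∈ range (N - k + 1), v i ≤
      (∑ k ∈ range (N + 1), b k) * ∑ i ∈ range (N + 1), v i := by
  rw [sum_mul]
  exact sum_le_sum fun k _ => mul_le_mul_of_nonneg_left
    (sum_le_sum_of_subset_of_nonneg (range_subset_range.2 (by omega)) fun i _ _ => hv i) (hb k)

theorem sum_range_mul_sub_le_sum_range_mul_sum_range_sub (hb : ∀ k, 0 ≤ b k)
    (hv : ∀ n, 0 ≤ v n) {C : ℝ} (hvC : ∀ n, v n ≤ C) {K N : ℕ} (hKN : K ≤ N) :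
    (∑ k ∈ range (K + 1), b k) * (∑ i ∈ range (N + 1), v i - K * C) ≤
      ∑ k ∈ range (N + 1), b k * ∑ i ∈ range (N - k + 1), v i := by
  have hC : 0 ≤ C := (hv 0).trans (hvC 0)
  rw [sum_mul]
  calc ∑ k ∈ range (K + 1), b k * (∑ i ∈ range (N + 1), v i - K * C)
      ≤ ∑ k ∈ range (K + 1), b k * ∑ i ∈ range (N - k + 1), v i := by
        refine sum_le_sum fun k hk => mul_le_mul_of_nonneg_left ?_ (hb k)
        have hk : k ≤ K := Nat.lt_succ_iff.1 (mem_range.1 hk)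
        have h := sum_range_add_le hvC (N - k + 1) k
        rw [show N - k + 1 + k = N + 1 by omega] at h
        have : (k : ℝ) * C ≤ K * C := mul_le_mul_of_nonneg_right (by exact_mod_cast hk) hC
        linarith
    _ ≤ ∑ k ∈ range (N + 1), b k * ∑ i ∈ range (N - k + 1), v i :=
        sum_le_sum_of_subset_of_nonneg (range_subset_range.2 (by omega))
          fun k _ _ => mul_nonneg (hb k) (sum_nonneg fun i _ => hv i)

theorem tendsto_sum_range_div_of_tendsto_sum_antidiagonal (hb : ∀ k, 0 ≤ b k) (hb0 : 0 < b 0)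
    {B L : ℝ} (hbB : HasSum b B) (hv : ∀ n, 0 ≤ v n)
    (hconv : Tendsto (fun n => ∑ p ∈ antidiagonal n, b p.1 * v p.2) atTop (𝓝 L)) :
    Tendsto (fun n : ℕ => (∑ i ∈ range (n + 1), v i) / n) atTop (𝓝 (L / B)) := by
  obtain ⟨C, hvC⟩ := exists_le_of_tendsto_sum_antidiagonal hb hb0 hv hconv
  set S : ℕ → ℝ := fun n => ∑ i ∈ range (n + 1), v i
  set W : ℕ → ℝ := fun N => ∑ k ∈ range (N + 1), b k * ∑ i ∈ range (N - k + 1), v i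
  set BK : ℕ → ℝ := fun K => ∑ k ∈ range (K + 1), b k
  have hW : Tendsto (fun N : ℕ => W N / N) atTop (𝓝 L) := by
    simpa only [W, sum_range_mul_sum_range_sub] using hconv.sum_range_succ_div
  have hBK : Tendsto BK atTop (𝓝 B) := hbB.tendsto_sum_nat.comp (tendsto_add_atTop_nat 1)
  have hBK_pos (K : ℕ) : 0 < BK K := hb0.trans_le (single_le_sum (fun k _ => hb k) (by simp))
  have hB : 0 < B := hb0.trans_le (le_hasSum hbB 0 fun k _ => hb k)
  have hlower (N : ℕ) : W N ≤ B * S N := (sum_range_mul_sum_range_sub_le hb hv N).trans <|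
    mul_le_mul_of_nonneg_right (sum_le_hasSum _ (fun k _ => hb k) hbB) (sum_nonneg fun i _ => hv i)
  refine tendsto_of_lower_of_upper_family (hW.div_const B) ?_
    (tendsto_const_nhds.div hBK hB.ne') (U := fun K N => W N / N / BK K + K * C / N)
    (fun K => by
      simpa using (hW.div_const (BK K)).add (tendsto_const_div_atTop_nhds_zero_nat (K * C)))
    (Eventually.of_forall fun K => ?_)
  · refine Eventually.of_forall fun N => ?_
    rw [div_right_comm]
    exact div_le_div_of_nonneg_right ((div_le_iff₀' hB).2 (hlower N)) N.cast_nonneg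
  · filter_upwards [eventually_ge_atTop K] with N hKN
    rw [div_right_comm, ← add_div]
    refine div_le_div_of_nonneg_right ?_ N.cast_nonneg
    rw [← sub_le_iff_le_add, le_div_iff₀ (hBK_pos K), mul_comm]
    exact sum_range_mul_sub_le_sum_range_mul_sum_range_sub hb hv hvC hKN

end RenewalTheorem

/-- Theorem of Takács: if `γ₁ = Σ_{j≥1} j f_j = 1` and `γ₂ = Σ_{j≥2} j(j-1) f_j < ∞`, then
`Q_n / n → 2 Q_0 / γ₂`. -/
theorem takacs_gamma1_eq_one
    (f Q : ℕ → ℝ)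
    (hf0 : 0 < f 0) (hf : ∀ i, 0 ≤ f i)
    (hfsum : ∑' i : ℕ, f i = 1)
    (hQ0 : 0 < Q 0)
    (hrec : ∀ n, Q n = ∑ i ∈ Finset.range (n + 1), f i * Q (n - i + 1))
    (hγ1 : ∑' j : ℕ, ENNReal.ofReal ((j : ℝ) * f j) = 1)
    (hγ2 : ∑' j : ℕ, ENNReal.ofReal ((j.descFactorial 2 : ℝ) * f j) < ⊤) :
    Tendsto (fun n => Q n / n) atTop
      (𝓝 (2 * Q 0 / (∑' j : ℕ, ENNReal.ofReal ((j.descFactorial 2 : ℝ) * f j)).toReal)) := by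
  have hfs : HasSum f 1 := by
    have hsum : Summable f := by
      by_contra h
      exact zero_ne_one ((tsum_eq_zero_of_not_summable h).symm.trans hfsum)
    exact hfsum ▸ hsum.hasSum
  have hm : HasSum (tailSum f) 1 := by
    have h := hasSum_tailSum hf hfs.summable (hγ1 ▸ ENNReal.one_ne_top)
    rwa [hγ1, ENNReal.toReal_one] at h
  have hb := hasSum_tailSum_tailSum hf hfs.summable hm.summable hγ2.ne
  have hb0 : tailSum (tailSum f) 0 = f 0 := by rw [tailSum_zero hm, tailSum_zero hfs]; ring
  have key := tendsto_sum_range_div_of_tendsto_sum_antidiagonal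
    (tailSum_nonneg (tailSum_nonneg hf)) (hb0 ▸ hf0) hb
    (coeff_one_sub_X_mul_mk_nonneg hfs hf0 hf hQ0.le hrec)
    (by simpa only [PowerSeries.coeff_mul, PowerSeries.coeff_mk]
      using tendsto_coeff_mk_tailSum_tailSum_mul hfs hm hrec)
  rw [mul_comm, ← div_div_eq_mul_div]
  exact key.congr fun n => by
    rw [PowerSeries.sum_range_coeff_one_sub_X_mul, PowerSeries.coeff_mk]
end

section
/- Let σ_m(n) ∈ (0,1) denote the unique root in (0,1) of the equation z = α_n(mμ_n − mμ_n z), and let α_n'(s) = −∫_0^∞ x e^{−sx} dA_n(x) denote the derivative of α_n. Then 1 + mμ_n α_n'(mμ_n − mμ_n σ_m(n)) = ε_n + o(ε_n) as n → ∞; that is, (1 + mμ_n α_n'(mμ_n − mμ_n σ_m(n)))/ε_n → 1. -/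
/-!
Write `X = mμ_n x`, `δ = 1 - σ_m(n)` and `r = 𝔼 X = 1 / (1 - ε_n)`. Integrating the second and
third order Taylor bounds of `e^{-u}` (`u ≥ 0`) against the root equation `𝔼 e^{-δX} = 1 - δ`
pins down `δ 𝔼 X² = 2 (r - 1) + O(δ² 𝔼 X³)`, while Jensen's inequality `e^{-δr} ≤ 1 - δ` forces
`δ = O(ε_n)`. Expanding `𝔼 [X e^{-δX}] = r - δ 𝔼 X² + O(δ² 𝔼 X³)` the same way gives
`1 - 𝔼 [X e^{-δX}] = r - 1 + O(ε_n²) = ε_n + O(ε_n²)`, with constants controlled by the bound on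
the third moments.
-/

open MeasureTheory Filter Topology

open Real

theorem le_of_hasDerivAt_le_of_nonneg {f g f' g' : ℝ → ℝ} (hf : ∀ t, HasDerivAt f (f' t) t)
    (hg : ∀ t, HasDerivAt g (g' t) t) (h₀ : f 0 ≤ g 0) (hderiv : ∀ t, 0 ≤ t → f' t ≤ g' t)
    {u : ℝ} (hu : 0 ≤ u) : f u ≤ g u := by
  have hmono : MonotoneOn (g - f) (Set.Ici 0) := by
    refine monotoneOn_of_hasDerivWithinAt_nonneg (convex_Ici 0) ?_
      (fun t _ => ((hg t).sub (hf t)).hasDerivWithinAt) ?_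
    · exact fun t _ => ((hg t).sub (hf t)).continuousAt.continuousWithinAt
    · intro t ht
      rw [interior_Ici] at ht
      exact sub_nonneg.2 (hderiv t (le_of_lt ht))
  have := hmono Set.self_mem_Ici hu hu
  simp only [Pi.sub_apply] at this
  linarith

theorem hasDerivAt_exp_neg (t : ℝ) : HasDerivAt (fun t => exp (-t)) (-exp (-t)) t := by
  simpa using (hasDerivAt_neg t).exp

theorem exp_neg_le_one_sub_add_sq_div_two {u : ℝ} (hu : 0 ≤ u) :
    exp (-u) ≤ 1 - u + u ^ 2 / 2 := by
  refine le_of_hasDerivAt_le_of_nonneg hasDerivAt_exp_neg (g := fun t => 1 - t + t ^ 2 / 2)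
    (g' := fun t => -1 + t)
    (fun t => ?_) (by simp) (fun t _ => by linarith [one_sub_le_exp_neg t]) hu
  exact (((hasDerivAt_id t).const_sub 1).add ((hasDerivAt_pow 2 t).div_const 2)).congr_deriv
    (by push_cast; ring)

theorem one_sub_add_sq_div_two_sub_cube_div_six_le_exp_neg {u : ℝ} (hu : 0 ≤ u) :
    1 - u + u ^ 2 / 2 - u ^ 3 / 6 ≤ exp (-u) := by
  refine le_of_hasDerivAt_le_of_nonneg (f := fun t => 1 - t + t ^ 2 / 2 - t ^ 3 / 6)
    (f' := fun t => -1 + t - t ^ 2 / 2) (fun t => ?_)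
    hasDerivAt_exp_neg (by simp)
    (fun t ht => by linarith [exp_neg_le_one_sub_add_sq_div_two ht]) hu
  exact ((((hasDerivAt_id t).const_sub 1).add ((hasDerivAt_pow 2 t).div_const 2)).sub
    ((hasDerivAt_pow 3 t).div_const 6)).congr_deriv (by push_cast; ring)

theorem le_six_mul_sub_one_of_exp_neg_mul_le {δ r : ℝ} (hδ : 0 < δ) (hδ1 : δ ≤ 1) (hr1 : 1 ≤ r)
    (hr2 : r ≤ 2) (h : exp (-(δ * r)) ≤ 1 - δ) : δ ≤ 6 * (r - 1) := by
  have hcubic := (one_sub_add_sq_div_two_sub_cube_div_six_le_exp_neg (by positivity)).trans h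
  have hδr : δ * r ≤ 2 := by nlinarith
  have hsq : δ ^ 2 ≤ (δ * r) ^ 2 * (3 - δ * r) :=
    calc δ ^ 2 ≤ (δ * r) ^ 2 := pow_le_pow_left₀ hδ.le (le_mul_of_one_le_right hδ.le hr1) 2
      _ ≤ (δ * r) ^ 2 * (3 - δ * r) := le_mul_of_one_le_right (sq_nonneg _) (by linarith)
  have : δ * δ ≤ δ * (6 * (r - 1)) := by nlinarith
  exact le_of_mul_le_mul_left this hδ

theorem abs_one_sub_sub_sub_one_le {δ r ρ2 ρ3 j : ℝ} (hδ : 0 < δ) (hρ3 : 0 ≤ ρ3)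
    (hupper : 1 - δ ≤ 1 - δ * r + δ ^ 2 / 2 * ρ2)
    (hlower : 1 - δ * r + δ ^ 2 / 2 * ρ2 - δ ^ 3 / 6 * ρ3 ≤ 1 - δ)
    (hj_lower : r - δ * ρ2 ≤ j) (hj_upper : j ≤ r - δ * ρ2 + δ ^ 2 / 2 * ρ3) :
    |1 - j - (r - 1)| ≤ δ ^ 2 / 2 * ρ3 := by
  have hρ2_lower : 2 * (r - 1) ≤ δ * ρ2 :=
    le_of_mul_le_mul_left (by linarith) hδ
  have hρ2_upper : δ * ρ2 ≤ 2 * (r - 1) + δ ^ 2 / 3 * ρ3 :=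
    le_of_mul_le_mul_left (by linarith) hδ
  have := mul_nonneg (sq_nonneg δ) hρ3
  rw [abs_le]
  constructor <;> linarith

section Moments

variable {Ω : Type*} [MeasurableSpace Ω] {P : Measure Ω} [IsProbabilityMeasure P] {X : Ω → ℝ}

theorem exp_integral_le_integral_exp {f : Ω → ℝ} (hf : Integrable f P)
    (hexp : Integrable (fun ω => exp (f ω)) P) : exp (∫ ω, f ω ∂P) ≤ ∫ ω, exp (f ω) ∂P :=
  convexOn_exp.map_integral_le continuous_exp.continuousOn isClosed_univ (by simp) hf hexp

section Polynomial

variable (h1 : Integrable X P) (h2 : Integrable (fun ω => X ω ^ 2) P) (a b c : ℝ)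
include h1 h2

theorem integrable_quadratic : Integrable (fun ω => a + b * X ω + c * X ω ^ 2) P :=
  ((integrable_const a).add (h1.const_mul b)).add (h2.const_mul c)

theorem integral_quadratic :
    ∫ ω, (a + b * X ω + c * X ω ^ 2) ∂P = a + b * ∫ ω, X ω ∂P + c * ∫ ω, X ω ^ 2 ∂P := by
  rw [integral_add (f := fun ω => a + b * X ω) ((integrable_const a).add (h1.const_mul b))
      (h2.const_mul c),
    integral_add (integrable_const a) (h1.const_mul b)]
  simp only [integral_const, integral_const_mul, probReal_univ, one_smul]

variable (h3 : Integrable (fun ω => X ω ^ 3) P) (d : ℝ)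
include h3

theorem integrable_cubic : Integrable (fun ω => a + b * X ω + c * X ω ^ 2 + d * X ω ^ 3) P :=
  (integrable_quadratic h1 h2 a b c).add (h3.const_mul d)

theorem integral_cubic :
    ∫ ω, (a + b * X ω + c * X ω ^ 2 + d * X ω ^ 3) ∂P
      = a + b * ∫ ω, X ω ∂P + c * ∫ ω, X ω ^ 2 ∂P + d * ∫ ω, X ω ^ 3 ∂P := by
  rw [integral_add (integrable_quadratic h1 h2 a b c) (h3.const_mul d), integral_quadratic h1 h2,
    integral_const_mul]

end Polynomial

section Laplace

variable (hX : ∀ᵐ ω ∂P, 0 ≤ X ω) (h1 : Integrable X P)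
include hX h1

section FixedRate

variable {t : ℝ} (ht : 0 ≤ t)
include ht

theorem integrable_exp_neg_mul : Integrable (fun ω => exp (-(t * X ω))) P := by
  refine (integrable_const (1 : ℝ)).mono'
    ((by fun_prop : Continuous fun y => exp (-(t * y))).comp_aestronglyMeasurable h1.1) ?_
  filter_upwards [hX] with ω hω
  rw [norm_of_nonneg (exp_pos _).le, exp_le_one_iff, neg_nonpos]
  exact mul_nonneg ht hω

theorem integrable_mul_exp_neg_mul : Integrable (fun ω => X ω * exp (-(t * X ω))) P := by
  refine h1.mul_bdd (c := 1) (integrable_exp_neg_mul hX h1 ht).1 ?_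
  filter_upwards [hX] with ω hω
  rw [norm_of_nonneg (exp_pos _).le, exp_le_one_iff, neg_nonpos]
  exact mul_nonneg ht hω

theorem exp_neg_mul_integral_le : exp (-(t * ∫ ω, X ω ∂P)) ≤ ∫ ω, exp (-(t * X ω)) ∂P := by
  have := exp_integral_le_integral_exp (f := fun ω => -(t * X ω)) (h1.const_mul t).neg
    (integrable_exp_neg_mul hX h1 ht)
  rwa [integral_neg, integral_const_mul] at this

variable (h2 : Integrable (fun ω => X ω ^ 2) P)
include h2

theorem integral_exp_neg_mul_le :
    ∫ ω, exp (-(t * X ω)) ∂P ≤ 1 - t * ∫ ω, X ω ∂P + t ^ 2 / 2 * ∫ ω, X ω ^ 2 ∂P := by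
  have hle : ∀ᵐ ω ∂P, exp (-(t * X ω)) ≤ 1 + -t * X ω + t ^ 2 / 2 * X ω ^ 2 := by
    filter_upwards [hX] with ω hω
    exact (exp_neg_le_one_sub_add_sq_div_two (mul_nonneg ht hω)).trans_eq (by ring)
  have := integral_mono_ae (integrable_exp_neg_mul hX h1 ht) (integrable_quadratic h1 h2 _ _ _) hle
  rw [integral_quadratic h1 h2] at this
  linarith

theorem le_integral_mul_exp_neg_mul :
    ∫ ω, X ω ∂P - t * ∫ ω, X ω ^ 2 ∂P ≤ ∫ ω, X ω * exp (-(t * X ω)) ∂P := by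
  have hle : ∀ᵐ ω ∂P, 0 + 1 * X ω + -t * X ω ^ 2 ≤ X ω * exp (-(t * X ω)) := by
    filter_upwards [hX] with ω hω
    exact le_of_eq_of_le (by ring) (mul_le_mul_of_nonneg_left (one_sub_le_exp_neg _) hω)
  have := integral_mono_ae (integrable_quadratic h1 h2 _ _ _)
    (integrable_mul_exp_neg_mul hX h1 ht) hle
  rw [integral_quadratic h1 h2] at this
  linarith

variable (h3 : Integrable (fun ω => X ω ^ 3) P)
include h3

theorem le_integral_exp_neg_mul :
    1 - t * ∫ ω, X ω ∂P + t ^ 2 / 2 * ∫ ω, X ω ^ 2 ∂P - t ^ 3 / 6 * ∫ ω, X ω ^ 3 ∂P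
      ≤ ∫ ω, exp (-(t * X ω)) ∂P := by
  have hle : ∀ᵐ ω ∂P,
      1 + -t * X ω + t ^ 2 / 2 * X ω ^ 2 + -(t ^ 3 / 6) * X ω ^ 3 ≤ exp (-(t * X ω)) := by
    filter_upwards [hX] with ω hω
    exact le_of_eq_of_le (by ring)
      (one_sub_add_sq_div_two_sub_cube_div_six_le_exp_neg (mul_nonneg ht hω))
  have := integral_mono_ae (integrable_cubic h1 h2 _ _ _ h3 _)
    (integrable_exp_neg_mul hX h1 ht) hle
  rw [integral_cubic h1 h2 _ _ _ h3] at this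
  linarith

theorem integral_mul_exp_neg_mul_le :
    ∫ ω, X ω * exp (-(t * X ω)) ∂P
      ≤ ∫ ω, X ω ∂P - t * ∫ ω, X ω ^ 2 ∂P + t ^ 2 / 2 * ∫ ω, X ω ^ 3 ∂P := by
  have hle : ∀ᵐ ω ∂P,
      X ω * exp (-(t * X ω)) ≤ 0 + 1 * X ω + -t * X ω ^ 2 + t ^ 2 / 2 * X ω ^ 3 := by
    filter_upwards [hX] with ω hω
    exact (mul_le_mul_of_nonneg_left
      (exp_neg_le_one_sub_add_sq_div_two (mul_nonneg ht hω)) hω).trans_eq (by ring)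
  have := integral_mono_ae (integrable_mul_exp_neg_mul hX h1 ht)
    (integrable_cubic h1 h2 _ _ _ h3 _) hle
  rw [integral_cubic h1 h2 _ _ _ h3] at this
  linarith

end FixedRate

theorem abs_one_sub_integral_mul_exp_neg_sub_le (h2 : Integrable (fun ω => X ω ^ 2) P)
    (h3 : Integrable (fun ω => X ω ^ 3) P) {ε σ B : ℝ} (hε : 0 < ε) (hε2 : ε ≤ 1 / 2)
    (hσ : σ ∈ Set.Ioo 0 1) (hmean : (1 - ε) * ∫ ω, X ω ∂P = 1)
    (hroot : ∫ ω, exp (-((1 - σ) * X ω)) ∂P = σ) (hB : ∫ ω, X ω ^ 3 ∂P ≤ B) :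
    |1 - ∫ ω, X ω * exp (-((1 - σ) * X ω)) ∂P - ε| ≤ (2 + 72 * B) * ε ^ 2 := by
  obtain ⟨hσ0, hσ1⟩ := hσ
  set δ := 1 - σ
  set r := ∫ ω, X ω ∂P
  set ρ3 := ∫ ω, X ω ^ 3 ∂P
  have hδ0 : 0 < δ := by linarith
  have hr : r - 1 = ε * r := by linarith
  have hr1 : 1 ≤ r := by nlinarith
  have hr2 : r ≤ 2 := by nlinarith
  have hσδ : σ = 1 - δ := by ring
  have hjensen : exp (-(δ * r)) ≤ 1 - δ :=
    hσδ ▸ hroot ▸ exp_neg_mul_integral_le hX h1 hδ0.le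
  have hδε : δ ≤ 12 * ε := by
    nlinarith [le_six_mul_sub_one_of_exp_neg_mul_le hδ0 (by linarith) hr1 hr2 hjensen]
  have hρ3 : 0 ≤ ρ3 := integral_nonneg_of_ae (hX.mono fun ω h => pow_nonneg h 3)
  have hkey := abs_one_sub_sub_sub_one_le hδ0 hρ3
    (hσδ ▸ hroot ▸ integral_exp_neg_mul_le hX h1 hδ0.le h2)
    (hσδ ▸ hroot ▸ le_integral_exp_neg_mul hX h1 hδ0.le h2 h3)
    (le_integral_mul_exp_neg_mul hX h1 hδ0.le h2)
    (integral_mul_exp_neg_mul_le hX h1 hδ0.le h2 h3)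
  have hremainder : δ ^ 2 / 2 * ρ3 ≤ 72 * B * ε ^ 2 :=
    calc δ ^ 2 / 2 * ρ3 ≤ (12 * ε) ^ 2 / 2 * ρ3 := by gcongr
      _ = 72 * ε ^ 2 * ρ3 := by ring
      _ ≤ 72 * B * ε ^ 2 := by nlinarith
  have hr_sub_le : r - 1 - ε ≤ 2 * ε ^ 2 := by nlinarith
  have hr_sub_nonneg : 0 ≤ r - 1 - ε := by nlinarith
  rw [abs_le] at hkey ⊢
  constructor <;> linarith

end Laplace

end Moments

theorem tendsto_div_of_abs_sub_le_mul_sq {ι : Type*} {l : Filter ι} {f ε : ι → ℝ} {C : ℝ}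
    (hε : ∀ i, 0 < ε i) (hε0 : Tendsto ε l (𝓝 0)) (h : ∀ᶠ i in l, |f i - ε i| ≤ C * ε i ^ 2) :
    Tendsto (fun i => f i / ε i) l (𝓝 1) := by
  rw [tendsto_iff_norm_sub_tendsto_zero]
  refine squeeze_zero' (Eventually.of_forall fun i => norm_nonneg _) ?_
    (by simpa using hε0.const_mul C)
  filter_upwards [h] with i hi
  have hεi := hε i
  rw [Real.norm_eq_abs, div_sub_one hεi.ne', abs_div, abs_of_pos hεi, div_le_iff₀ hεi]
  linarith

theorem abs_one_add_mul_neg_integral_mul_exp_sub_le {A : Measure ℝ} [IsProbabilityMeasure A]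
    (hA : ∀ᵐ x ∂A, 0 ≤ x) (h1 : Integrable (fun x => x) A)
    (h2 : Integrable (fun x => x ^ 2) A) (h3 : Integrable (fun x => x ^ 3) A)
    {β ε σ B : ℝ} (hβ : 0 < β) (hε : 0 < ε) (hε2 : ε ≤ 1 / 2) (hσ : σ ∈ Set.Ioo 0 1)
    (hϱ : (∫ x, x ∂A)⁻¹ / β = 1 - ε)
    (hroot : ∫ x, exp (-((β - β * σ) * x)) ∂A = σ) (hB : ∫ x, (β * x) ^ 3 ∂A ≤ B) :
    |1 + β * (-(∫ x, x * exp (-((β - β * σ) * x)) ∂A)) - ε| ≤ (2 + 72 * B) * ε ^ 2 := by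
  have hscale : ∀ x, (β - β * σ) * x = (1 - σ) * (β * x) := fun x => by ring
  have hmean : (1 - ε) * ∫ x, β * x ∂A = 1 := by
    have hM : ∫ x, x ∂A ≠ 0 := fun h => by simp only [h, inv_zero, zero_div] at hϱ; linarith
    rw [← hϱ, integral_const_mul]
    field_simp
  have hX : ∀ᵐ x ∂A, 0 ≤ β * x := hA.mono fun x hx => mul_nonneg hβ.le hx
  have hβ2 : Integrable (fun x => (β * x) ^ 2) A := by simpa [mul_pow] using h2.const_mul (β ^ 2)
  have hβ3 : Integrable (fun x => (β * x) ^ 3) A := by simpa [mul_pow] using h3.const_mul (β ^ 3)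
  simp only [hscale] at hroot ⊢
  have := abs_one_sub_integral_mul_exp_neg_sub_le hX (h1.const_mul β) hβ2 hβ3 hε hε2 hσ hmean
    hroot hB
  simpa only [← integral_const_mul, mul_assoc, ← sub_eq_add_neg, mul_neg] using this

theorem derivative_term_asymptotics_general
    (m : ℕ) (hm : 1 ≤ m)
    (A : ℕ → Measure ℝ) [∀ n, IsProbabilityMeasure (A n)]
    (μ : ℕ → ℝ) (hμ : ∀ n, 0 < μ n)
    (hsupp : ∀ n, A n {x | x < 0} = 0)
    (hint1 : ∀ n, Integrable (fun x => x) (A n))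
    (hint2 : ∀ n, Integrable (fun x => x ^ 2) (A n))
    (hint3 : ∀ n, Integrable (fun x => x ^ 3) (A n))
    (ε : ℕ → ℝ) (hε : ∀ n, 0 < ε n) (hε0 : Tendsto ε atTop (𝓝 0))
    (hϱ : ∀ n, (∫ x, x ∂(A n))⁻¹ / (m * μ n) = 1 - ε n)
    (hϱ3 : ∃ B : ℝ, ∀ n, ∫ x, (m * μ n * x) ^ 3 ∂(A n) ≤ B)
    (σ : ℕ → ℝ) (hσ : ∀ n, σ n ∈ Set.Ioo (0 : ℝ) 1)
    (hroot : ∀ n, ∫ x, Real.exp (-((m * μ n - m * μ n * σ n) * x)) ∂(A n) = σ n) :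
    Tendsto
      (fun n =>
        (1 + m * μ n * (-(∫ x, x * Real.exp (-((m * μ n - m * μ n * σ n) * x)) ∂(A n))))
          / ε n)
      atTop (𝓝 1) := by
  obtain ⟨B, hB⟩ := hϱ3
  have hβ : ∀ n, 0 < (m : ℝ) * μ n := fun n => mul_pos (by exact_mod_cast hm) (hμ n)
  have hA : ∀ n, ∀ᵐ x ∂(A n), 0 ≤ x := fun n => by
    rw [ae_iff]
    simpa only [not_le] using hsupp n
  refine tendsto_div_of_abs_sub_le_mul_sq hε hε0 (C := 2 + 72 * B) ?_
  filter_upwards [hε0.eventually (ge_mem_nhds (by norm_num : (0 : ℝ) < 1 / 2))] with n hn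
  exact abs_one_add_mul_neg_integral_mul_exp_sub_le (hA n) (hint1 n) (hint2 n) (hint3 n) (hβ n)
    (hε n) hn (hσ n) (hϱ n) (hroot n) (hB n)

/-- Relation (7.2): in the heavy-traffic regime, with `σ_m(n)` the root in `(0,1)` of
`z = α_n(mμ_n - mμ_n z)`, one has `1 + mμ_n α_n'(mμ_n - mμ_n σ_m(n)) = ε_n + o(ε_n)`. -/
theorem derivative_term_asymptotics
    (m : ℕ) (hm : 1 ≤ m)
    (A : ℕ → Measure ℝ) [∀ n, IsProbabilityMeasure (A n)]
    (μ : ℕ → ℝ) (hμ : ∀ n, 0 < μ n)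
    (hsupp : ∀ n, A n {x | x < 0} = 0)
    (hint1 : ∀ n, Integrable (fun x => x) (A n))
    (hint2 : ∀ n, Integrable (fun x => x ^ 2) (A n))
    (hint3 : ∀ n, Integrable (fun x => x ^ 3) (A n))
    (ε : ℕ → ℝ) (hε : ∀ n, 0 < ε n) (hε0 : Tendsto ε atTop (𝓝 0))
    (hϱ : ∀ n, (∫ x, x ∂(A n))⁻¹ / (m * μ n) = 1 - ε n)
    (hϱ3 : ∃ B : ℝ, ∀ n, ∫ x, (m * μ n * x) ^ 3 ∂(A n) ≤ B)
    (ρ2 : ℝ) (hϱ2 : Tendsto (fun n => ∫ x, (m * μ n * x) ^ 2 ∂(A n)) atTop (𝓝 ρ2))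
    (σ : ℕ → ℝ) (hσ : ∀ n, σ n ∈ Set.Ioo (0 : ℝ) 1)
    (hroot : ∀ n, ∫ x, Real.exp (-((m * μ n - m * μ n * σ n) * x)) ∂(A n) = σ n) :
    Tendsto
      (fun n =>
        (1 + m * μ n * (-(∫ x, x * Real.exp (-((m * μ n - m * μ n * σ n) * x)) ∂(A n))))
          / ε n)
      atTop (𝓝 1) :=
  derivative_term_asymptotics_general m hm A μ hμ hsupp hint1 hint2 hint3 ε hε hε0 hϱ hϱ3 σ hσ hroot
end

section
/- Assume the mean interarrival time is finite, 0 < ∫_0^∞ x dA(x) < ∞. Then lim_{n→∞} [ Σ_{l=1}^n l r_{0,m,l} + Σ_{k=1}^{m−1} (n+k) r_{k,m−k,n} ] = Σ_{l=1}^∞ l r_{0,m,l} = mμ/λ = 1/ϱ (for m = 1 the second sum is empty). -/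
/-!
Write `c = mμ` and `p_l(z) = e^{-z} z^l / l!` for the Poisson weights. Since `Σ_l l p_l(z) = z`,
dominated convergence (with the series itself as dominating function) gives
`Σ_l l r_{0,m,l} = c ∫ x dA`.

For the terms with `k ≥ 1`, on `0 ≤ u ≤ x` the kernel satisfies
`e^{-(m-k)μx} (e^{-μu} - e^{-μx})^k ≤ e^{-cu}`, so `r_{k,m-k,n}` is bounded by `binom(m,k)` times
the integral of the Erlang distribution function
`∫_0^x e^{-cu} (cu)^{n-1}/(n-1)! c du = Σ_{i ≥ n} p_i(cx)`.
As `n + k ≤ (1 + k) i` for `i ≥ n ≥ 1`, the term `(n + k) r_{k,m-k,n}` is at most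
`binom(m,k) (1 + k) ∫ Σ_{i ≥ n} i p_i(cx) dA(x)`, the integrated tail of the mean series, which
tends to `0`.
-/

open MeasureTheory Filter Topology

open Real Nat

noncomputable def poissonTerm (z : ℝ) (l : ℕ) : ℝ := exp (-z) * z ^ l / l !

lemma poissonTerm_nonneg {z : ℝ} (hz : 0 ≤ z) (l : ℕ) : 0 ≤ poissonTerm z l := by
  unfold poissonTerm; positivity

@[fun_prop]
lemma continuous_poissonTerm (l : ℕ) : Continuous fun z => poissonTerm z l := by
  unfold poissonTerm; fun_prop

lemma hasSum_poissonTerm (z : ℝ) : HasSum (poissonTerm z) 1 := by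
  have h := (NormedSpace.expSeries_div_hasSum_exp z).mul_left (exp (-z))
  rw [← Real.exp_eq_exp_ℝ, ← Real.exp_add, neg_add_cancel, Real.exp_zero] at h
  unfold poissonTerm
  simpa only [mul_div_assoc] using h

lemma hasSum_natCast_mul_poissonTerm (z : ℝ) :
    HasSum (fun l : ℕ => (l : ℝ) * poissonTerm z l) z := by
  rw [← hasSum_nat_add_iff' 1]
  have h := (hasSum_poissonTerm z).mul_left z
  simp only [Finset.range_one, Finset.sum_singleton, CharP.cast_eq_zero, zero_mul, sub_zero,
    mul_one] at h ⊢
  refine h.congr_fun fun l => ?_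
  simp only [poissonTerm, factorial_succ, pow_succ, cast_mul, cast_add, cast_one]
  field_simp

lemma hasDerivAt_sum_range_poissonTerm (c t : ℝ) (j : ℕ) :
    HasDerivAt (fun t => ∑ i ∈ Finset.range (j + 1), poissonTerm (c * t) i)
      (-(poissonTerm (c * t) j * c)) t := by
  have hexp : HasDerivAt (fun t => exp (-(c * t))) (exp (-(c * t)) * -c) t := by
    simpa using (((hasDerivAt_id t).const_mul c).neg).exp
  induction j with
  | zero => simpa [poissonTerm, mul_comm] using hexp
  | succ j ih =>
    have hpow : HasDerivAt (fun t => (c * t) ^ (j + 1)) ((j + 1 : ℕ) * (c * t) ^ j * c) t := by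
      simpa using ((hasDerivAt_id t).const_mul c).fun_pow (j + 1)
    simp only [Finset.sum_range_succ _ (j + 1)]
    refine (ih.add ((hexp.mul hpow).div_const ((j + 1)! : ℝ))).congr_deriv ?_
    simp only [poissonTerm, factorial_succ, cast_mul]
    field_simp
    ring

lemma hasSum_poissonTerm_add_integral (c x : ℝ) (j : ℕ) :
    HasSum (fun i => poissonTerm (c * x) (i + (j + 1)))
      (∫ u in (0 : ℝ)..x, poissonTerm (c * u) j * c) := by
  have hcont : Continuous fun u => poissonTerm (c * u) j * c := by fun_prop
  have hftc := intervalIntegral.integral_eq_sub_of_hasDerivAt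
    (fun t _ => hasDerivAt_sum_range_poissonTerm c t j) (hcont.neg.intervalIntegrable 0 x)
  have hzero : ∑ i ∈ Finset.range (j + 1), poissonTerm (c * 0) i = 1 := by
    rw [Finset.sum_eq_single_of_mem 0 (by simp)] <;> intros <;> simp_all [poissonTerm]
  rw [intervalIntegral.integral_neg, hzero, neg_eq_iff_eq_neg, neg_sub] at hftc
  rw [hftc, hasSum_nat_add_iff' (j + 1)]
  exact hasSum_poissonTerm (c * x)

lemma natCast_add_mul_integral_poissonTerm_le {c x k : ℝ} (hc : 0 ≤ c) (hx : 0 ≤ x)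
    (hk : 0 ≤ k) (j : ℕ) :
    ((j + 1 : ℕ) + k) * ∫ u in (0 : ℝ)..x, poissonTerm (c * u) j * c ≤
      (1 + k) * (c * x - ∑ l ∈ Finset.range (j + 1), l * poissonTerm (c * x) l) := by
  have htail := (hasSum_nat_add_iff' (j + 1)).mpr (hasSum_natCast_mul_poissonTerm (c * x))
  refine hasSum_le (fun i => ?_) ((hasSum_poissonTerm_add_integral c x j).mul_left _)
    (htail.mul_left (1 + k))
  have hcoeff : ((j + 1 : ℕ) : ℝ) + k ≤ (1 + k) * ((i + (j + 1) : ℕ) : ℝ) := by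
    push_cast
    nlinarith [(i.cast_nonneg : (0 : ℝ) ≤ i), (j.cast_nonneg : (0 : ℝ) ≤ j)]
  rw [← mul_assoc]
  exact mul_le_mul_of_nonneg_right hcoeff (poissonTerm_nonneg (mul_nonneg hc hx) _)

lemma exp_mul_sub_exp_pow_le {a b u x : ℝ} (ha : 0 ≤ a) (hb : 0 ≤ b) (hux : u ≤ x) (k : ℕ) :
    exp (-(a * x)) * (exp (-(b * u)) - exp (-(b * x))) ^ k ≤ exp (-((a + k * b) * u)) := by
  have hdiff : 0 ≤ exp (-(b * u)) - exp (-(b * x)) :=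
    sub_nonneg.2 (exp_le_exp.2 (by nlinarith))
  calc exp (-(a * x)) * (exp (-(b * u)) - exp (-(b * x))) ^ k
      ≤ exp (-(a * u)) * exp (-(b * u)) ^ k := by
        gcongr
        exact sub_le_self _ (exp_pos _).le
    _ = exp (-((a + k * b) * u)) := by
        rw [← exp_nat_mul, ← exp_add]
        ring_nf

/-- With `a = (m - k) μ`, `b = μ`, `c = m μ` and `j = n - 1`, this is the integrand of
`r_{k,m-k,n}` in (5.3), without the factor `binom(m,k)`. -/
noncomputable def rIntegrand (a b c : ℝ) (k j : ℕ) (x : ℝ) : ℝ :=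
  exp (-(a * x)) * ∫ u in (0 : ℝ)..x, (c * u) ^ j / j ! * (exp (-(b * u)) - exp (-(b * x))) ^ k * c

section rIntegrand

variable {a b c x : ℝ} {k : ℕ}

lemma rIntegrand_nonneg (hb : 0 ≤ b) (hc : 0 ≤ c) (hx : 0 ≤ x) (j : ℕ) :
    0 ≤ rIntegrand a b c k j x := by
  refine mul_nonneg (exp_pos _).le (intervalIntegral.integral_nonneg hx fun u hu => ?_)
  have : 0 ≤ exp (-(b * u)) - exp (-(b * x)) :=
    sub_nonneg.2 (exp_le_exp.2 (by nlinarith [hu.1, hu.2]))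
  have : 0 ≤ c * u := mul_nonneg hc hu.1
  positivity

lemma rIntegrand_le_integral_poissonTerm (ha : 0 ≤ a) (hb : 0 ≤ b) (hc : 0 ≤ c)
    (hcab : c ≤ a + k * b) (hx : 0 ≤ x) (j : ℕ) :
    rIntegrand a b c k j x ≤ ∫ u in (0 : ℝ)..x, poissonTerm (c * u) j * c := by
  rw [rIntegrand, ← intervalIntegral.integral_const_mul]
  refine intervalIntegral.integral_mono_on hx (by apply Continuous.intervalIntegrable; fun_prop)
    (by apply Continuous.intervalIntegrable; fun_prop) fun u hu => ?_
  have hcu : 0 ≤ c * u := mul_nonneg hc hu.1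
  calc exp (-(a * x)) * ((c * u) ^ j / j ! * (exp (-(b * u)) - exp (-(b * x))) ^ k * c)
      = exp (-(a * x)) * (exp (-(b * u)) - exp (-(b * x))) ^ k * ((c * u) ^ j / j ! * c) := by
        ring
    _ ≤ exp (-(c * u)) * ((c * u) ^ j / j ! * c) := by
        gcongr
        exact (exp_mul_sub_exp_pow_le ha hb hu.2 k).trans
          (exp_le_exp.2 (by nlinarith [hu.1]))
    _ = poissonTerm (c * u) j * c := by
        rw [poissonTerm]; ring

end rIntegrand

section Mean

variable {A : Measure ℝ} {c : ℝ}

lemma natCast_mul_poissonTerm_le {z : ℝ} (hz : 0 ≤ z) (l : ℕ) : l * poissonTerm z l ≤ z :=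
  le_hasSum (hasSum_natCast_mul_poissonTerm z) l
    fun i _ => mul_nonneg i.cast_nonneg (poissonTerm_nonneg hz i)

lemma integrable_natCast_mul_poissonTerm (hc : 0 ≤ c) (h0 : ∀ᵐ x ∂A, 0 ≤ x)
    (hint : Integrable (fun x => x) A) (l : ℕ) :
    Integrable (fun x => l * poissonTerm (c * x) l) A := by
  refine (hint.const_mul c).mono' (by fun_prop) (h0.mono fun x hx => ?_)
  have hcx : 0 ≤ c * x := mul_nonneg hc hx
  rw [Real.norm_of_nonneg (mul_nonneg l.cast_nonneg (poissonTerm_nonneg hcx l))]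
  exact natCast_mul_poissonTerm_le hcx l

lemma hasSum_natCast_mul_integral_poissonTerm (hc : 0 ≤ c) (h0 : ∀ᵐ x ∂A, 0 ≤ x)
    (hint : Integrable (fun x => x) A) :
    HasSum (fun l : ℕ => (l : ℝ) * ∫ x, poissonTerm (c * x) l ∂A) (c * ∫ x, x ∂A) := by
  have hnonneg : ∀ᵐ x ∂A, ∀ l : ℕ, 0 ≤ (l : ℝ) * poissonTerm (c * x) l :=
    h0.mono fun x hx l => mul_nonneg l.cast_nonneg (poissonTerm_nonneg (mul_nonneg hc hx) l)
  simp_rw [← integral_const_mul]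
  refine hasSum_integral_of_dominated_convergence (fun l x => l * poissonTerm (c * x) l)
    (fun l => by fun_prop) (fun l => hnonneg.mono fun x hx => (Real.norm_of_nonneg (hx l)).le)
    (.of_forall fun x => (hasSum_natCast_mul_poissonTerm (c * x)).summable) ?_
    (.of_forall fun x => hasSum_natCast_mul_poissonTerm (c * x))
  simpa only [(hasSum_natCast_mul_poissonTerm _).tsum_eq] using hint.const_mul c

lemma tendsto_integral_sub_sum_natCast_mul_poissonTerm (hc : 0 ≤ c) (h0 : ∀ᵐ x ∂A, 0 ≤ x)
    (hint : Integrable (fun x => x) A) :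
    Tendsto (fun n => ∫ x, (c * x - ∑ l ∈ Finset.range n, l * poissonTerm (c * x) l) ∂A)
      atTop (𝓝 0) := by
  have hterm := integrable_natCast_mul_poissonTerm hc h0 hint
  have hsum := (hasSum_natCast_mul_integral_poissonTerm hc h0 hint).tendsto_sum_nat
  simp_rw [integral_sub (hint.const_mul c) (integrable_finsetSum _ fun l _ => hterm l),
    integral_finsetSum _ fun l _ => hterm l, integral_const_mul c fun x : ℝ => x,
    integral_const_mul]
  simpa using hsum.const_sub (c * ∫ x, x ∂A)

end Mean

lemma tendsto_natCast_add_mul_integral_rIntegrand {A : Measure ℝ} {a b c : ℝ} {k : ℕ}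
    (ha : 0 ≤ a) (hb : 0 ≤ b) (hc : 0 ≤ c) (hcab : c ≤ a + k * b) (h0 : ∀ᵐ x ∂A, 0 ≤ x)
    (hint : Integrable (fun x => x) A) :
    Tendsto (fun n : ℕ => ((n : ℝ) + k) * ∫ x, rIntegrand a b c k (n - 1) x ∂A) atTop (𝓝 0) := by
  have htail := (tendsto_integral_sub_sum_natCast_mul_poissonTerm hc h0 hint).const_mul
    (1 + (k : ℝ))
  rw [mul_zero] at htail
  refine squeeze_zero' (.of_forall fun n => mul_nonneg (by positivity)
    (integral_nonneg_of_ae (h0.mono fun x hx => rIntegrand_nonneg hb hc hx _))) ?_ htail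
  filter_upwards [eventually_ge_atTop 1] with n hn
  obtain ⟨j, rfl⟩ := Nat.exists_eq_add_of_le' hn
  have htail_int : Integrable (fun x => c * x -
      ∑ l ∈ Finset.range (j + 1), l * poissonTerm (c * x) l) A :=
    (hint.const_mul c).sub
      (integrable_finsetSum _ fun l _ => integrable_natCast_mul_poissonTerm hc h0 hint l)
  rw [Nat.add_sub_cancel, ← integral_const_mul, ← integral_const_mul]
  refine integral_mono_of_nonneg (h0.mono fun x hx => mul_nonneg (by positivity)
    (rIntegrand_nonneg hb hc hx _)) (htail_int.const_mul _) (h0.mono fun x hx => ?_)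
  exact (mul_le_mul_of_nonneg_left (rIntegrand_le_integral_poissonTerm ha hb hc hcab hx j)
    (by positivity)).trans (natCast_add_mul_integral_poissonTerm_le hc hx k.cast_nonneg j)

theorem gamma1_limit_general
    (m : ℕ) (μ : ℝ) (hμ : 0 < μ)
    (A : Measure ℝ)
    (hsupp : A {x | x < 0} = 0)
    (hint : Integrable (fun x => x) A) :
    Summable (fun l : ℕ => (l : ℝ) *
      ∫ x, Real.exp (-(m * μ * x)) * (m * μ * x) ^ l / (Nat.factorial l) ∂A) ∧
    (∑' l : ℕ, (l : ℝ) *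
      ∫ x, Real.exp (-(m * μ * x)) * (m * μ * x) ^ l / (Nat.factorial l) ∂A)
      = m * μ * ∫ x, x ∂A ∧
    m * μ * ∫ x, x ∂A = ((∫ x, x ∂A)⁻¹ / (m * μ))⁻¹ ∧
    Tendsto
      (fun n : ℕ =>
        (∑ l ∈ Finset.Icc 1 n, (l : ℝ) *
          ∫ x, Real.exp (-(m * μ * x)) * (m * μ * x) ^ l / (Nat.factorial l) ∂A) +
        ∑ k ∈ Finset.Icc 1 (m - 1), ((n : ℝ) + k) *
          ((m.choose k : ℝ) *
            ∫ x, Real.exp (-(((m : ℝ) - k) * μ * x)) *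
              (∫ u in (0 : ℝ)..x,
                (m * μ * u) ^ (n - 1) / (Nat.factorial (n - 1)) *
                  (Real.exp (-(μ * u)) - Real.exp (-(μ * x))) ^ k * (m * μ)) ∂A))
      atTop (𝓝 (m * μ * ∫ x, x ∂A)) := by
  have h0 : ∀ᵐ x ∂A, 0 ≤ x := by simpa [ae_iff] using hsupp
  have hc : 0 ≤ (m : ℝ) * μ := by positivity
  have hmean := hasSum_natCast_mul_integral_poissonTerm hc h0 hint
  refine ⟨hmean.summable, hmean.tsum_eq, by rw [div_eq_mul_inv, mul_inv, inv_inv, inv_inv,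
    mul_comm], ?_⟩
  have hpartial := hmean.tendsto_sum_nat.comp (tendsto_add_atTop_nat 1)
  have hr : ∀ k ∈ Finset.Icc 1 (m - 1), Tendsto (fun n : ℕ => ((n : ℝ) + k) *
      ((m.choose k : ℝ) * ∫ x, rIntegrand ((m - k) * μ) μ (m * μ) k (n - 1) x ∂A))
      atTop (𝓝 0) := fun k hk => by
    have hkm : (k : ℝ) ≤ m := Nat.cast_le.2 (by grind)
    simpa [mul_left_comm] using ((tendsto_natCast_add_mul_integral_rIntegrand
      (mul_nonneg (sub_nonneg.2 hkm) hμ.le) hμ.le hc (le_of_eq (by ring)) h0 hint).const_mul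
      (m.choose k : ℝ))
  have hsum := hpartial.add (tendsto_finsetSum _ hr)
  rw [Finset.sum_const_zero, add_zero] at hsum
  refine hsum.congr fun n => ?_
  congr 1
  refine (Finset.sum_subset (fun l hl => ?_) fun l _ hl => ?_).symm
  · simp_all
  · simp_all [show l = 0 by grind]

/-- Relations (5.2)–(5.3): if the mean interarrival time is finite and positive, then
`Σ_{l=1}^n l r_{0,m,l} + Σ_{k=1}^{m-1} (n+k) r_{k,m-k,n} → Σ_{l=1}^∞ l r_{0,m,l} = mμ/λ = 1/ϱ`
as `n → ∞`. -/
theorem gamma1_limit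
    (m : ℕ) (hm : 1 ≤ m) (μ : ℝ) (hμ : 0 < μ)
    (A : Measure ℝ) [IsProbabilityMeasure A]
    (hsupp : A {x | x < 0} = 0)
    (hint : Integrable (fun x => x) A)
    (hmean : 0 < ∫ x, x ∂A) :
    Summable (fun l : ℕ => (l : ℝ) *
      ∫ x, Real.exp (-(m * μ * x)) * (m * μ * x) ^ l / (Nat.factorial l) ∂A) ∧
    (∑' l : ℕ, (l : ℝ) *
      ∫ x, Real.exp (-(m * μ * x)) * (m * μ * x) ^ l / (Nat.factorial l) ∂A)
      = m * μ * ∫ x, x ∂A ∧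
    m * μ * ∫ x, x ∂A = ((∫ x, x ∂A)⁻¹ / (m * μ))⁻¹ ∧
    Tendsto
      (fun n : ℕ =>
        (∑ l ∈ Finset.Icc 1 n, (l : ℝ) *
          ∫ x, Real.exp (-(m * μ * x)) * (m * μ * x) ^ l / (Nat.factorial l) ∂A) +
        ∑ k ∈ Finset.Icc 1 (m - 1), ((n : ℝ) + k) *
          ((m.choose k : ℝ) *
            ∫ x, Real.exp (-(((m : ℝ) - k) * μ * x)) *
              (∫ u in (0 : ℝ)..x,
                (m * μ * u) ^ (n - 1) / (Nat.factorial (n - 1)) *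
                  (Real.exp (-(μ * u)) - Real.exp (-(μ * x))) ^ k * (m * μ)) ∂A))
      atTop (𝓝 (m * μ * ∫ x, x ∂A)) :=
  gamma1_limit_general m μ hμ A hsupp hint
end

section
/- Let j ∈ {1, 2, 3} and assume the j-th moment is finite, ∫_0^∞ x^j dA(x) < ∞. Then for every k with 1 ≤ k ≤ m−1, (n+k)(n+k−1)⋯(n+k−j+1) · r_{k,m−k,n} → 0 as n → ∞ (the product in front of r_{k,m−k,n} consists of j consecutive factors starting with n+k). -/
/-!
Write `r_{k,m-k,n} = C(m,k) ∫ boundaryKernel m k n μ x dA(x)`. On `0 ≤ u ≤ x` one has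
`e^{-(m-k)μx} (e^{-μu} - e^{-μx})^k ≤ e^{-mμu}`, so comparing with the Gamma integral gives
`0 ≤ boundaryKernel m k n μ x ≤ (mμx)^p / (n-p)^p` for every `p < n`. The prefactor is `O(n^j)`:
taking `p = j` dominates the integrands by a multiple of `x^j`, integrable by the moment
assumption, and taking `p = j + 1` makes them tend to `0` pointwise. Dominated convergence
concludes.
-/

open MeasureTheory Filter Topology

section

open Real Set
open scoped Nat

theorem intervalIntegral_exp_neg_mul_pow_le_factorial (q : ℕ) {y : ℝ} (hy : 0 ≤ y) :
    ∫ v in (0 : ℝ)..y, exp (-v) * v ^ q ≤ q ! := by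
  have hGamma : IntegrableOn (fun v : ℝ => exp (-v) * v ^ q) (Ioi 0) := by
    simpa [← rpow_natCast] using GammaIntegral_convergent (s := q + 1) (by positivity)
  have hΓ : (q ! : ℝ) = ∫ v in Ioi 0, exp (-v) * v ^ q := by
    rw [← Gamma_nat_eq_factorial, Gamma_eq_integral (by positivity)]
    simp [← rpow_natCast]
  rw [intervalIntegral.integral_of_le hy, hΓ]
  refine setIntegral_mono_set hGamma ?_ Ioc_subset_Ioi_self.eventuallyLE
  filter_upwards [ae_restrict_mem measurableSet_Ioi] with v hv
  exact mul_nonneg (exp_pos _).le (pow_nonneg hv.le q)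

theorem exp_mul_mul_sub_exp_pow_le {m k : ℕ} (hk : k ≤ m) {μ u x : ℝ} (hμ : 0 ≤ μ)
    (hux : u ≤ x) :
    exp (-((m - k) * μ * x)) * (exp (-(μ * u)) - exp (-(μ * x))) ^ k
      ≤ exp (-(m * μ * u)) := by
  have hmk : (0 : ℝ) ≤ m - k := sub_nonneg.2 (by exact_mod_cast hk)
  have hdiff : 0 ≤ exp (-(μ * u)) - exp (-(μ * x)) :=
    sub_nonneg.2 (exp_le_exp.2 (by nlinarith))
  calc exp (-((m - k) * μ * x)) * (exp (-(μ * u)) - exp (-(μ * x))) ^ k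
      ≤ exp (-((m - k) * μ * u)) * exp (-(μ * u)) ^ k := by
        gcongr
        exact sub_le_self _ (exp_pos _).le
    _ = exp (-(m * μ * u)) := by
        rw [← exp_nat_mul, ← exp_add]
        ring_nf

noncomputable def boundaryKernel (m k n : ℕ) (μ x : ℝ) : ℝ :=
  exp (-(((m : ℝ) - k) * μ * x)) *
    ∫ u in (0 : ℝ)..x, (m * μ * u) ^ (n - 1) / (n - 1)! *
      (exp (-(μ * u)) - exp (-(μ * x))) ^ k * (m * μ)

theorem boundaryKernel_nonneg (m k n : ℕ) {μ x : ℝ} (hμ : 0 ≤ μ) (hx : 0 ≤ x) :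
    0 ≤ boundaryKernel m k n μ x := by
  refine mul_nonneg (exp_pos _).le (intervalIntegral.integral_nonneg hx fun u ⟨hu0, hux⟩ => ?_)
  have hdiff : 0 ≤ exp (-(μ * u)) - exp (-(μ * x)) :=
    sub_nonneg.2 (exp_le_exp.2 (by nlinarith))
  positivity

theorem continuous_boundaryKernel (m k n : ℕ) (μ : ℝ) : Continuous (boundaryKernel m k n μ) := by
  refine .mul (by fun_prop) ?_
  exact intervalIntegral.continuous_parametric_intervalIntegral_of_continuous
    (f := fun x u => (m * μ * u) ^ (n - 1) / (n - 1)! *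
      (exp (-(μ * u)) - exp (-(μ * x))) ^ k * (m * μ)) (by fun_prop) continuous_id

theorem boundaryKernel_le_div_pow {m k n p : ℕ} {μ x : ℝ} (hk : k ≤ m) (hm : 0 < m)
    (hμ : 0 < μ) (hx : 0 ≤ x) (hpn : p < n) :
    boundaryKernel m k n μ x ≤ (m * μ * x) ^ p / (n - p) ^ p := by
  obtain ⟨q, rfl⟩ : ∃ q, n = p + q + 1 := ⟨n - p - 1, by omega⟩
  set c : ℝ := m * μ with hc_def
  have hc : 0 < c := mul_pos (by exact_mod_cast hm) hμ
  have hpointwise : ∀ u ∈ Icc 0 x,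
      exp (-(((m : ℝ) - k) * μ * x)) * ((c * u) ^ (p + q + 1 - 1) / (p + q + 1 - 1)! *
        (exp (-(μ * u)) - exp (-(μ * x))) ^ k * c)
      ≤ (c * x) ^ p / (p + q)! * (c * (exp (-(c * u)) * (c * u) ^ q)) := by
    rintro u ⟨hu0, hux⟩
    calc _ = (c * u) ^ (p + q) / (p + q)! * c *
          (exp (-(((m : ℝ) - k) * μ * x)) * (exp (-(μ * u)) - exp (-(μ * x))) ^ k) := by
          rw [Nat.add_sub_cancel]; ring
      _ ≤ (c * u) ^ (p + q) / (p + q)! * c * exp (-(c * u)) := by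
          gcongr
          exact exp_mul_mul_sub_exp_pow_le hk hμ.le hux
      _ = (c * u) ^ p / (p + q)! * (c * (exp (-(c * u)) * (c * u) ^ q)) := by ring
      _ ≤ (c * x) ^ p / (p + q)! * (c * (exp (-(c * u)) * (c * u) ^ q)) := by gcongr
  have hgamma : ∫ u in (0 : ℝ)..x, c * (exp (-(c * u)) * (c * u) ^ q) ≤ q ! := by
    rw [intervalIntegral.integral_const_mul,
      intervalIntegral.mul_integral_comp_mul_left (f := fun v => exp (-v) * v ^ q), mul_zero]
    exact intervalIntegral_exp_neg_mul_pow_le_factorial q (by positivity)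
  have hfactorial : (q ! : ℝ) / (p + q)! ≤ 1 / (q + 1) ^ p := by
    rw [div_le_div_iff₀ (by positivity) (by positivity), one_mul, add_comm p q]
    exact_mod_cast Nat.factorial_mul_pow_le_factorial
  calc boundaryKernel m k (p + q + 1) μ x
      = ∫ u in (0 : ℝ)..x, exp (-(((m : ℝ) - k) * μ * x)) *
          ((c * u) ^ (p + q + 1 - 1) / (p + q + 1 - 1)! *
            (exp (-(μ * u)) - exp (-(μ * x))) ^ k * c) :=
        (intervalIntegral.integral_const_mul _ _).symm
    _ ≤ ∫ u in (0 : ℝ)..x, (c * x) ^ p / (p + q)! * (c * (exp (-(c * u)) * (c * u) ^ q)) :=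
        intervalIntegral.integral_mono_on hx
          (Continuous.intervalIntegrable (by fun_prop) _ _)
          (Continuous.intervalIntegrable (by fun_prop) _ _) hpointwise
    _ = (c * x) ^ p / (p + q)! * ∫ u in (0 : ℝ)..x, c * (exp (-(c * u)) * (c * u) ^ q) :=
        intervalIntegral.integral_const_mul _ _
    _ ≤ (c * x) ^ p / (p + q)! * q ! := by gcongr
    _ = (c * x) ^ p * (q ! / (p + q)!) := by ring
    _ ≤ (c * x) ^ p * (1 / (q + 1) ^ p) := by gcongr
    _ = (c * x) ^ p / (((p + q + 1 : ℕ) : ℝ) - p) ^ p := by push_cast; ring_nf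

theorem abs_prod_sub_natCast_le {y : ℝ} (hy : 0 ≤ y) (j : ℕ) :
    |∏ i ∈ Finset.range j, (y - i)| ≤ (y + j) ^ j := by
  rw [Finset.abs_prod]
  calc ∏ i ∈ Finset.range j, |y - i| ≤ ∏ _i ∈ Finset.range j, (y + j) := by
        refine Finset.prod_le_prod (fun _ _ => abs_nonneg _) fun i hi => abs_le.2 ⟨?_, ?_⟩
        · have : (i : ℝ) < j := by exact_mod_cast Finset.mem_range.1 hi
          linarith
        · have : (0 : ℝ) ≤ i := i.cast_nonneg
          have : (0 : ℝ) ≤ j := j.cast_nonneg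
          linarith
    _ = (y + j) ^ j := by rw [Finset.prod_const, Finset.card_range]

theorem abs_prod_mul_boundaryKernel_le {m k n j d : ℕ} {μ x : ℝ} (hk : k ≤ m) (hm : 0 < m)
    (hμ : 0 < μ) (hx : 0 ≤ x) (hn : k + j + 2 * (j + d) < n) :
    |∏ i ∈ Finset.range j, ((n : ℝ) + k - i)| * boundaryKernel m k n μ x
      ≤ 2 ^ j * (m * μ * x) ^ (j + d) / (n - (j + d)) ^ d := by
  have hn' : (k : ℝ) + j + 2 * (j + d) < n := by exact_mod_cast hn
  set t : ℝ := n - (j + d) with ht_def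
  have hkj : (0 : ℝ) ≤ k + j := by positivity
  have ht : 0 < t := by linarith
  have hprod : |∏ i ∈ Finset.range j, ((n : ℝ) + k - i)| ≤ (2 * t) ^ j :=
    (abs_prod_sub_natCast_le (by positivity) j).trans (by gcongr; linarith)
  have hkernel : boundaryKernel m k n μ x ≤ (m * μ * x) ^ (j + d) / t ^ (j + d) := by
    simpa [ht_def] using boundaryKernel_le_div_pow (p := j + d) hk hm hμ hx (by omega)
  calc |∏ i ∈ Finset.range j, ((n : ℝ) + k - i)| * boundaryKernel m k n μ x
      ≤ (2 * t) ^ j * ((m * μ * x) ^ (j + d) / t ^ (j + d)) :=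
        mul_le_mul hprod hkernel (boundaryKernel_nonneg _ _ _ hμ.le hx) (by positivity)
    _ = 2 ^ j * (m * μ * x) ^ (j + d) / t ^ d := by
        rw [mul_pow, pow_add t]
        field_simp

theorem norm_prod_mul_boundaryKernel_le {m k n j : ℕ} {μ x : ℝ} (hk : k ≤ m) (hm : 0 < m)
    (hμ : 0 < μ) (hx : 0 ≤ x) (hn : k + 3 * j < n) :
    ‖(∏ i ∈ Finset.range j, ((n : ℝ) + k - i)) * boundaryKernel m k n μ x‖
      ≤ 2 ^ j * (m * μ) ^ j * x ^ j := by
  rw [norm_mul, Real.norm_eq_abs, Real.norm_of_nonneg (boundaryKernel_nonneg _ _ _ hμ.le hx)]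
  simpa [mul_pow, mul_assoc] using
    abs_prod_mul_boundaryKernel_le (d := 0) hk hm hμ hx (by omega)

theorem tendsto_prod_mul_boundaryKernel {m k j : ℕ} {μ x : ℝ} (hk : k ≤ m) (hm : 0 < m)
    (hμ : 0 < μ) (hx : 0 ≤ x) :
    Tendsto (fun n : ℕ => (∏ i ∈ Finset.range j, ((n : ℝ) + k - i)) * boundaryKernel m k n μ x)
      atTop (𝓝 0) := by
  refine squeeze_zero_norm' (a := fun n : ℕ => 2 ^ j * (m * μ * x) ^ (j + 1) / (n - (j + 1)))
    ?_ ?_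
  · filter_upwards [eventually_gt_atTop (k + j + 2 * (j + 1))] with n hn
    rw [norm_mul, Real.norm_eq_abs, Real.norm_of_nonneg (boundaryKernel_nonneg _ _ _ hμ.le hx)]
    simpa using abs_prod_mul_boundaryKernel_le hk hm hμ hx hn
  · refine tendsto_const_nhds.div_atTop ?_
    simpa only [sub_eq_add_neg] using
      tendsto_atTop_add_const_right _ _ tendsto_natCast_atTop_atTop

end

theorem boundary_coefficient_vanishing_general
    (m : ℕ) (μ : ℝ) (hμ : 0 < μ)
    (A : Measure ℝ)
    (hsupp : A {x | x < 0} = 0)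
    (j : ℕ)
    (hmom : Integrable (fun x => x ^ j) A) :
    ∀ k : ℕ, 1 ≤ k → k ≤ m - 1 →
      Tendsto
        (fun n : ℕ =>
          (∏ i ∈ Finset.range j, ((n : ℝ) + k - i)) *
            ((m.choose k : ℝ) *
              ∫ x, Real.exp (-(((m : ℝ) - k) * μ * x)) *
                (∫ u in (0 : ℝ)..x,
                  (m * μ * u) ^ (n - 1) / (Nat.factorial (n - 1)) *
                    (Real.exp (-(μ * u)) - Real.exp (-(μ * x))) ^ k * (m * μ)) ∂A))
        atTop (𝓝 0) := by
  intro k hk1 hk2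
  have hk : k ≤ m := by omega
  have hm : 0 < m := by omega
  have hA : ∀ᵐ x ∂A, 0 ≤ x := by simpa [ae_iff] using hsupp
  have hlim := tendsto_integral_filter_of_dominated_convergence (μ := A) (l := atTop)
    (F := fun (n : ℕ) x => (m.choose k : ℝ) *
      ((∏ i ∈ Finset.range j, ((n : ℝ) + k - i)) * boundaryKernel m k n μ x))
    (f := 0) (fun x => (m.choose k : ℝ) * (2 ^ j * (m * μ) ^ j * x ^ j))
    (.of_forall fun n => (continuous_boundaryKernel m k n μ).aestronglyMeasurable.const_mul _
      |>.const_mul _)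
    ?_ ((hmom.const_mul _).const_mul _) ?_
  · simp only [Pi.zero_apply, integral_zero, integral_const_mul] at hlim
    exact hlim.congr fun n => mul_left_comm _ _ _
  · filter_upwards [eventually_gt_atTop (k + 3 * j)] with n hn
    filter_upwards [hA] with x hx
    rw [norm_mul, Real.norm_of_nonneg (by positivity)]
    gcongr
    exact norm_prod_mul_boundaryKernel_le hk hm hμ hx hn
  · filter_upwards [hA] with x hx
    simpa using (tendsto_prod_mul_boundaryKernel hk hm hμ hx).const_mul (m.choose k : ℝ)

/-- Vanishing of the boundary coefficients (Section 5): if `j ∈ {1,2,3}` and the `j`-th moment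
of `A` is finite, then for each `1 ≤ k ≤ m-1`,
`(n+k)(n+k-1)⋯(n+k-j+1) r_{k,m-k,n} → 0` as `n → ∞`. -/
theorem boundary_coefficient_vanishing
    (m : ℕ) (hm : 2 ≤ m) (μ : ℝ) (hμ : 0 < μ)
    (A : Measure ℝ) [IsProbabilityMeasure A]
    (hsupp : A {x | x < 0} = 0)
    (j : ℕ) (hj : j ∈ ({1, 2, 3} : Finset ℕ))
    (hmom : Integrable (fun x => x ^ j) A) :
    ∀ k : ℕ, 1 ≤ k → k ≤ m - 1 →
      Tendsto
        (fun n : ℕ =>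
          (∏ i ∈ Finset.range j, ((n : ℝ) + k - i)) *
            ((m.choose k : ℝ) *
              ∫ x, Real.exp (-(((m : ℝ) - k) * μ * x)) *
                (∫ u in (0 : ℝ)..x,
                  (m * μ * u) ^ (n - 1) / (Nat.factorial (n - 1)) *
                    (Real.exp (-(μ * u)) - Real.exp (-(μ * x))) ^ k * (m * μ)) ∂A))
        atTop (𝓝 0) :=
  boundary_coefficient_vanishing_general m μ hμ A hsupp j hmom
end
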